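/- arXiv:2502.12087 — 3 statements merged into one kernel-verified Lean document; each statement's English description precedes it below -/
import Mathlib

section
/- Let d ≥ 1, let A_1,…,A_d : ℝ^d → ℝ be smooth, set B_{kj} = ∂A_j/∂x_k − ∂A_k/∂x_j, and fix x₀ ∈ ℝ^d. Define A^{(x₀)}_j(Z) = ∑_{k=1}^d (∫_0^1 B_{kj}(x₀ + τZ) τ dτ) Z_k. Then for every integer r ≥ 1, every j = 1,…,d and every Z ∈ ℝ^d, the r-th derivative at t = 0 of the function t ↦ A^{(x₀)}_j(tZ) equals (r/(r+1)) ∑_{k=1}^d Z_k · (the (r−1)-st derivative at t = 0 of the function t ↦ B_{kj}(x₀ + tZ)). In particular, the degree-r homogeneous Taylor term of A^{(x₀)}_j at 0 is determined by the derivatives of the magnetic field at x₀ of order r−1. -/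
open scoped BigOperators

open MeasureTheory intervalIntegral Metric

/-- `Φ g n t = ∫_0^1 g^{(n)}(tτ) τ^{n+1} dτ`. -/
noncomputable def poincarePhi (g : ℝ → ℝ) (n : ℕ) (t : ℝ) : ℝ :=
  ∫ τ in (0:ℝ)..1, iteratedDeriv n g (t * τ) * τ ^ (n + 1)

lemma smooth_iteratedDeriv {g : ℝ → ℝ} (hg : ContDiff ℝ ((⊤ : ℕ∞) : WithTop ℕ∞) g) (n : ℕ) :
    ContDiff ℝ ((⊤ : ℕ∞) : WithTop ℕ∞) (iteratedDeriv n g) := by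
  rw [iteratedDeriv_eq_iterate]
  exact hg.iterate_deriv n

/-- Differentiation under the integral sign for `poincarePhi`. -/
lemma poincarePhi_hasDerivAt {g : ℝ → ℝ} (hg : ContDiff ℝ ((⊤ : ℕ∞) : WithTop ℕ∞) g)
    (n : ℕ) (t : ℝ) :
    HasDerivAt (poincarePhi g n) (poincarePhi g (n + 1) t) t := by
  have hgn : Continuous (iteratedDeriv n g) := (smooth_iteratedDeriv hg n).continuous
  have hgn1 : Continuous (iteratedDeriv (n + 1) g) := (smooth_iteratedDeriv hg (n + 1)).continuous
  obtain ⟨C, hC⟩ : ∃ C, ∀ y ∈ Set.Icc (-(|t| + 1)) (|t| + 1), ‖iteratedDeriv (n + 1) g y‖ ≤ C :=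
    (isCompact_Icc).exists_bound_of_continuousOn hgn1.continuousOn
  have main := hasDerivAt_integral_of_dominated_loc_of_deriv_le (𝕜 := ℝ) (μ := volume)
    (F := fun x τ => iteratedDeriv n g (x * τ) * τ ^ (n + 1))
    (F' := fun x τ => iteratedDeriv (n + 1) g (x * τ) * τ ^ (n + 2))
    (x₀ := t) (bound := fun _ => C) (a := 0) (b := 1) (s := ball t 1) (ball_mem_nhds t one_pos)
    (Filter.Eventually.of_forall fun x =>
      ((hgn.comp (continuous_const.mul continuous_id)).mul
        (continuous_pow _)).aestronglyMeasurable)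
    (((hgn.comp (continuous_const.mul continuous_id)).mul
        (continuous_pow _)).intervalIntegrable 0 1)
    ((hgn1.comp (continuous_const.mul continuous_id)).mul
        (continuous_pow _)).aestronglyMeasurable
    ?_ (intervalIntegrable_const) ?_
  · have h2 : poincarePhi g (n + 1) t
        = ∫ τ in (0:ℝ)..1, iteratedDeriv (n + 1) g (t * τ) * τ ^ (n + 2) := rfl
    rw [poincarePhi, h2] at *
    exact main.2
  · refine Filter.Eventually.of_forall fun τ hτ x hx => ?_
    have hτ' : τ ∈ Set.Ioc (0:ℝ) 1 := by
      simpa [Set.uIoc_of_le (zero_le_one' ℝ)] using hτ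
    have h1 : |x * τ| ≤ |t| + 1 := by
      have h2 : |x| ≤ |t| + 1 := by
        have hd := mem_ball_iff_norm.mp hx
        have ha := abs_sub_abs_le_abs_sub x t
        simp only [Real.norm_eq_abs] at hd
        linarith
      have h3 : |τ| ≤ 1 := by rw [abs_of_pos hτ'.1]; exact hτ'.2
      calc |x * τ| = |x| * |τ| := abs_mul x τ
        _ ≤ (|t| + 1) * 1 := mul_le_mul h2 h3 (abs_nonneg τ) (by positivity)
        _ = |t| + 1 := mul_one _
    have hb := hC _ (abs_le.mp h1)
    have hp : |τ ^ (n + 2)| ≤ 1 := by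
      rw [abs_pow]
      exact pow_le_one₀ (abs_nonneg τ) (by rw [abs_of_pos hτ'.1]; exact hτ'.2)
    calc ‖iteratedDeriv (n + 1) g (x * τ) * τ ^ (n + 2)‖
        = ‖iteratedDeriv (n + 1) g (x * τ)‖ * |τ ^ (n + 2)| := by
          simp [abs_mul]
      _ ≤ C * 1 := mul_le_mul hb hp (abs_nonneg _) ((norm_nonneg _).trans hb)
      _ = C := mul_one _
  · refine Filter.Eventually.of_forall fun τ _ x _ => ?_
    have h1 : HasDerivAt (fun x : ℝ => x * τ) τ x := by
      simpa using (hasDerivAt_id x).mul_const τ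
    have h2 : HasDerivAt (iteratedDeriv n g) (iteratedDeriv (n + 1) g (x * τ)) (x * τ) := by
      rw [iteratedDeriv_succ]
      exact (((smooth_iteratedDeriv hg n).differentiable
        (by simp)) (x * τ)).hasDerivAt
    have h3 := (h2.comp x h1).mul_const (τ ^ (n + 1))
    refine h3.congr_deriv ?_
    ring

/-- Iterated derivatives of `t ↦ ∑ c k * (t * Φ_k(0,t))`. -/
lemma poincare_iter {ι : Type*} (s : Finset ι) (c : ι → ℝ) (g : ι → ℝ → ℝ)
    (hg : ∀ k ∈ s, ContDiff ℝ ((⊤ : ℕ∞) : WithTop ℕ∞) (g k)) :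
    ∀ (n : ℕ) (t : ℝ),
      iteratedDeriv (n + 1) (fun t : ℝ => ∑ k ∈ s, c k * (t * poincarePhi (g k) 0 t)) t
        = ∑ k ∈ s, c k * (t * poincarePhi (g k) (n + 1) t
            + ((n : ℝ) + 1) * poincarePhi (g k) n t) := by
  intro n
  induction n with
  | zero =>
    intro t
    rw [iteratedDeriv_one]
    refine HasDerivAt.deriv ?_
    refine HasDerivAt.fun_sum fun k hk => ?_
    have h := ((hasDerivAt_id t).mul (poincarePhi_hasDerivAt (hg k hk) 0 t)).const_mul (c k)
    refine h.congr_deriv ?_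
    simp only [id_eq]
    push_cast
    ring
  | succ n ih =>
    intro t
    rw [iteratedDeriv_succ]
    have hfe : iteratedDeriv (n + 1) (fun t : ℝ => ∑ k ∈ s, c k * (t * poincarePhi (g k) 0 t))
        = fun t => ∑ k ∈ s, c k * (t * poincarePhi (g k) (n + 1) t
            + ((n : ℝ) + 1) * poincarePhi (g k) n t) := funext ih
    rw [hfe]
    refine HasDerivAt.deriv ?_
    refine HasDerivAt.fun_sum fun k hk => ?_
    have h := (((hasDerivAt_id t).mul (poincarePhi_hasDerivAt (hg k hk) (n + 1) t)).add
      ((poincarePhi_hasDerivAt (hg k hk) n t).const_mul ((n : ℝ) + 1))).const_mul (c k)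
    refine h.congr_deriv ?_
    simp only [id_eq]
    push_cast
    ring

/-- Directional-derivative form of the Abraham–Bismut–Patodi identity: the `r`-th derivative
at `t = 0` of `t ↦ A^{(x₀)}_j(tZ)` equals `(r/(r+1)) ∑_k Z_k` times the `(r-1)`-st derivative
at `t = 0` of `t ↦ B_{kj}(x₀ + tZ)`. -/
theorem poincare_gauge_taylor_term
    (d : ℕ) (hd : 1 ≤ d)
    (A : Fin d → (Fin d → ℝ) → ℝ) (hA : ∀ j, ContDiff ℝ (⊤ : ℕ∞) (A j))
    (B : Fin d → Fin d → (Fin d → ℝ) → ℝ)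
    (hB : ∀ k j x, B k j x =
      fderiv ℝ (A j) x (Pi.single k 1) - fderiv ℝ (A k) x (Pi.single j 1))
    (x₀ : Fin d → ℝ)
    (A' : Fin d → (Fin d → ℝ) → ℝ)
    (hA' : ∀ j Z, A' j Z = ∑ k, (∫ τ in (0:ℝ)..1, B k j (x₀ + τ • Z) * τ) * Z k) :
    ∀ (r : ℕ), 1 ≤ r → ∀ (j : Fin d) (Z : Fin d → ℝ),
      iteratedDeriv r (fun t : ℝ => A' j (t • Z)) 0
        = ((r : ℝ) / (r + 1)) *
            ∑ k, Z k * iteratedDeriv (r - 1) (fun t : ℝ => B k j (x₀ + t • Z)) 0 := by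
  intro r hr j Z
  obtain ⟨m, rfl⟩ : ∃ m, r = m + 1 := ⟨r - 1, (Nat.succ_pred_eq_of_pos hr).symm⟩
  set g : Fin d → ℝ → ℝ := fun k => fun t : ℝ => B k j (x₀ + t • Z) with hg_def
  -- smoothness of each `g k`
  have hgc : ∀ k, ContDiff ℝ ((⊤ : ℕ∞) : WithTop ℕ∞) (g k) := by
    intro k
    have hBkj : B k j = fun x =>
        fderiv ℝ (A j) x (Pi.single k 1) - fderiv ℝ (A k) x (Pi.single j 1) :=
      funext (hB k j)
    have h1 : ContDiff ℝ ((⊤ : ℕ∞) : WithTop ℕ∞)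
        (fun x => fderiv ℝ (A j) x (Pi.single k 1)) :=
      ((hA j).fderiv_right (by simp)).clm_apply contDiff_const
    have h2 : ContDiff ℝ ((⊤ : ℕ∞) : WithTop ℕ∞)
        (fun x => fderiv ℝ (A k) x (Pi.single j 1)) :=
      ((hA k).fderiv_right (by simp)).clm_apply contDiff_const
    have hBc : ContDiff ℝ ((⊤ : ℕ∞) : WithTop ℕ∞) (B k j) := by
      rw [hBkj]; exact h1.sub h2
    have haff : ContDiff ℝ ((⊤ : ℕ∞) : WithTop ℕ∞) (fun t : ℝ => x₀ + t • Z) :=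
      contDiff_const.add (contDiff_id.smul contDiff_const)
    exact hBc.comp haff
  -- rewrite the function whose derivative we take
  have hfun : (fun t : ℝ => A' j (t • Z))
      = fun t : ℝ => ∑ k, Z k * (t * poincarePhi (g k) 0 t) := by
    funext t
    rw [hA']
    refine Finset.sum_congr rfl fun k _ => ?_
    have hint : (∫ τ in (0:ℝ)..1, B k j (x₀ + τ • (t • Z)) * τ) = poincarePhi (g k) 0 t := by
      rw [poincarePhi]
      refine intervalIntegral.integral_congr fun τ _ => ?_
      rw [iteratedDeriv_zero, pow_one, hg_def]
      have : τ • (t • Z) = (t * τ) • Z := by rw [smul_smul, mul_comm]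
      rw [this]
    rw [hint]
    simp only [Pi.smul_apply, smul_eq_mul]
    ring
  rw [hfun, poincare_iter Finset.univ Z g (fun k _ => hgc k) m 0]
  -- evaluate `poincarePhi (g k) m 0`
  have hphi0 : ∀ k, poincarePhi (g k) m 0 = iteratedDeriv m (g k) 0 * (1 / ((m : ℝ) + 2)) := by
    intro k
    rw [poincarePhi]
    have : (∫ τ in (0:ℝ)..1, iteratedDeriv m (g k) (0 * τ) * τ ^ (m + 1))
        = ∫ τ in (0:ℝ)..1, iteratedDeriv m (g k) 0 * τ ^ (m + 1) := by
      refine intervalIntegral.integral_congr fun τ _ => by rw [zero_mul]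
    rw [this, intervalIntegral.integral_const_mul, integral_pow]
    push_cast
    ring
  have hr1 : (m + 1) - 1 = m := rfl
  rw [hr1, Finset.mul_sum]
  refine Finset.sum_congr rfl fun k _ => ?_
  rw [hphi0 k]
  have hgk : (fun t : ℝ => B k j (x₀ + t • Z)) = g k := rfl
  rw [hgk]
  have hm2 : ((m : ℝ) + 2) ≠ 0 := by positivity
  push_cast
  field_simp
  ring
end

section
/- Let d ≥ 1, fix x₀ ∈ ℝ^d, let A_1,…,A_d : ℝ^d → ℝ and V : ℝ^d → ℝ be smooth, set B_{kj} = ∂A_j/∂x_k − ∂A_k/∂x_j, and define the Poincaré gauge potential A^{(x₀)}_j(Z) = ∑_{k=1}^d (∫_0^1 B_{kj}(x₀ + τZ) τ dτ) Z_k. Fix a smooth u : ℝ^d → ℂ and Z ∈ ℝ^d, and for h ∈ ℝ set F(h) = −∑_{j=1}^d ((∂/∂Z_j − i A^{(x₀)}_j(h·))² u)(Z) + V(x₀ + hZ) u(Z). Then (1/2)F″(0) = (2i/3) ∑_{j,k,ℓ=1}^d (∂B_{kj}/∂x_ℓ)(x₀) Z_k Z_ℓ (∂u/∂Z_j)(Z)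 + [ (i/3) ∑_{j,k=1}^d (∂B_{kj}/∂x_j)(x₀) Z_k + (1/4) ∑_{j=1}^d ( ∑_{k=1}^d B_{kj}(x₀) Z_k )² + (1/2) ∑_{k,ℓ=1}^d (∂²V/∂x_k∂x_ℓ)(x₀) Z_k Z_ℓ ] u(Z). -/
open scoped BigOperators

open MeasureTheory intervalIntegral

noncomputable section AuxMag

variable {d : ℕ}

/-- The basic parametric integral. -/
def magPhi (x₀ : Fin d → ℝ) (f : (Fin d → ℝ) → ℝ) (n : ℕ) (Y : Fin d → ℝ) : ℝ :=
  ∫ τ in (0:ℝ)..1, f (x₀ + τ • Y) * τ ^ n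

/-- fderiv applied to a fixed vector. -/
def dapp (f : (Fin d → ℝ) → ℝ) (w : Fin d → ℝ) : (Fin d → ℝ) → ℝ :=
  fun x => fderiv ℝ f x w

theorem dapp_contDiff {f : (Fin d → ℝ) → ℝ} (hf : ContDiff ℝ (⊤ : ℕ∞) f) (w : Fin d → ℝ) :
    ContDiff ℝ (⊤ : ℕ∞) (dapp f w) :=
  (hf.fderiv_right (by simp)).clm_apply contDiff_const

theorem magPhi_hasFDerivAt (x₀ : Fin d → ℝ) {f : (Fin d → ℝ) → ℝ} (hf : ContDiff ℝ (⊤ : ℕ∞) f)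
    (n : ℕ) (Y : Fin d → ℝ) :
    HasFDerivAt (magPhi x₀ f n)
      (∫ τ in (0:ℝ)..1, (τ ^ (n+1)) • fderiv ℝ f (x₀ + τ • Y)) Y := by
  have hfc : Continuous f := hf.continuous
  have hfd : Continuous (fderiv ℝ f) := hf.continuous_fderiv (by simp)
  -- compactness bound
  obtain ⟨C, hC⟩ : ∃ C, ∀ x ∈ (fun p : ℝ × (Fin d → ℝ) => x₀ + p.1 • p.2) ''
      (Set.Icc (0:ℝ) 1 ×ˢ Metric.closedBall Y 1), ‖fderiv ℝ f x‖ ≤ C := by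
    apply IsCompact.exists_bound_of_continuousOn
    · exact (isCompact_Icc.prod (isCompact_closedBall Y 1)).image
        (continuous_const.add (continuous_fst.smul continuous_snd))
    · exact hfd.continuousOn
  have hcont1 : ∀ W : Fin d → ℝ, Continuous fun τ : ℝ => f (x₀ + τ • W) * τ ^ n := fun W =>
    ((hfc.comp (continuous_const.add (continuous_id.smul continuous_const)))).mul
      (continuous_pow n)
  have hcont2 : Continuous fun τ : ℝ => (τ ^ (n+1)) • fderiv ℝ f (x₀ + τ • Y) :=
    (continuous_pow (n+1)).smul
      (hfd.comp (continuous_const.add (continuous_id.smul continuous_const)))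
  have key := intervalIntegral.hasFDerivAt_integral_of_dominated_of_fderiv_le
    (μ := volume) (a := (0:ℝ)) (b := 1) (𝕜 := ℝ)
    (F := fun (W : Fin d → ℝ) τ => f (x₀ + τ • W) * τ ^ n)
    (F' := fun W τ => (τ ^ (n+1)) • fderiv ℝ f (x₀ + τ • W))
    (x₀ := Y) (bound := fun _ => C) (Metric.ball_mem_nhds Y one_pos)
    (Filter.Eventually.of_forall fun W => ((hcont1 W).aestronglyMeasurable))
    ((hcont1 Y).intervalIntegrable 0 1)
    hcont2.aestronglyMeasurable.restrict
    ?_ intervalIntegrable_const ?_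
  · exact key
  · refine Filter.Eventually.of_forall fun τ hτ W hW => ?_
    rw [Set.uIoc_of_le (by norm_num : (0:ℝ) ≤ 1)] at hτ
    have h1 : ‖(τ ^ (n+1)) • fderiv ℝ f (x₀ + τ • W)‖
        = |τ| ^ (n+1) * ‖fderiv ℝ f (x₀ + τ • W)‖ := by
      rw [norm_smul, Real.norm_eq_abs, abs_pow]
    rw [h1]
    have hτ1 : |τ| ≤ 1 := by rw [abs_of_pos hτ.1]; exact hτ.2
    have hmem : x₀ + τ • W ∈ (fun p : ℝ × (Fin d → ℝ) => x₀ + p.1 • p.2) ''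
        (Set.Icc (0:ℝ) 1 ×ˢ Metric.closedBall Y 1) :=
      ⟨(τ, W), ⟨⟨le_of_lt hτ.1, hτ.2⟩, Metric.ball_subset_closedBall hW⟩, rfl⟩
    calc |τ| ^ (n+1) * ‖fderiv ℝ f (x₀ + τ • W)‖
        ≤ 1 * ‖fderiv ℝ f (x₀ + τ • W)‖ := by
          apply mul_le_mul_of_nonneg_right _ (norm_nonneg _)
          exact pow_le_one₀ (abs_nonneg τ) hτ1
      _ ≤ C := by rw [one_mul]; exact hC _ hmem
  · refine Filter.Eventually.of_forall fun τ hτ W hW => ?_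
    have h1 : HasFDerivAt (fun W : Fin d → ℝ => x₀ + τ • W)
        (τ • ContinuousLinearMap.id ℝ (Fin d → ℝ)) W :=
      ((hasFDerivAt_id W).const_smul τ).const_add x₀
    have h2 := ((hf.differentiable (by simp) (x₀ + τ • W)).hasFDerivAt).comp W h1
    have h3 := h2.const_smul (τ ^ n)
    have h4 : (fun W : Fin d → ℝ => f (x₀ + τ • W) * τ ^ n)
        = fun W => (τ ^ n) • ((fun W : Fin d → ℝ => f (x₀ + τ • W)) W) := by
      funext W; simp [smul_eq_mul]; ring
    rw [h4]
    refine h3.congr_fderiv ?_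
    ext w
    simp [pow_succ, ContinuousLinearMap.smul_apply, smul_eq_mul]
    ring


theorem magPhi_fderiv_apply (x₀ : Fin d → ℝ) {f : (Fin d → ℝ) → ℝ} (hf : ContDiff ℝ (⊤ : ℕ∞) f)
    (n : ℕ) (Y w : Fin d → ℝ) :
    (∫ τ in (0:ℝ)..1, (τ ^ (n+1)) • fderiv ℝ f (x₀ + τ • Y)) w
      = magPhi x₀ (dapp f w) (n+1) Y := by
  have hfd : Continuous (fderiv ℝ f) := hf.continuous_fderiv (by simp)
  have hcont : Continuous fun τ : ℝ => (τ ^ (n+1)) • fderiv ℝ f (x₀ + τ • Y) :=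
    (continuous_pow (n+1)).smul
      (hfd.comp (continuous_const.add (continuous_id.smul continuous_const)))
  rw [magPhi, intervalIntegral.integral_of_le (by norm_num : (0:ℝ) ≤ 1),
    intervalIntegral.integral_of_le (by norm_num : (0:ℝ) ≤ 1)]
  rw [ContinuousLinearMap.integral_apply (hcont.integrableOn_Ioc)]
  apply MeasureTheory.integral_congr_ae
  filter_upwards with τ
  simp only [ContinuousLinearMap.smul_apply, dapp, smul_eq_mul]
  ring

def lineΦ (x₀ Z : Fin d → ℝ) (f : (Fin d → ℝ) → ℝ) (n : ℕ) (h : ℝ) : ℝ :=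
  magPhi x₀ f n (h • Z)

theorem lineΦ_hasDerivAt (x₀ Z : Fin d → ℝ) {f : (Fin d → ℝ) → ℝ} (hf : ContDiff ℝ (⊤ : ℕ∞) f)
    (n : ℕ) (h : ℝ) :
    HasDerivAt (lineΦ x₀ Z f n) (lineΦ x₀ Z (dapp f Z) (n+1) h) h := by
  have h1 : HasDerivAt (fun h : ℝ => h • Z) Z h := by
    simpa using (hasDerivAt_id h).smul_const Z
  have h2 := (magPhi_hasFDerivAt x₀ hf n (h • Z)).comp_hasDerivAt h h1
  rw [magPhi_fderiv_apply x₀ hf n (h • Z) Z] at h2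
  exact h2

theorem magPhi_zero (x₀ : Fin d → ℝ) (f : (Fin d → ℝ) → ℝ) (n : ℕ) :
    magPhi x₀ f n 0 = f x₀ / (n + 1) := by
  rw [magPhi]
  simp only [smul_zero, add_zero]
  rw [intervalIntegral.integral_const_mul, integral_pow]
  norm_num
  rw [div_eq_mul_inv]

theorem lineΦ_zero (x₀ Z : Fin d → ℝ) (f : (Fin d → ℝ) → ℝ) (n : ℕ) :
    lineΦ x₀ Z f n 0 = f x₀ / (n + 1) := by
  rw [lineΦ, zero_smul, magPhi_zero]

/-- Linear expansion of a CLM application in the standard basis. -/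
theorem clm_apply_expand {M : Type*} [NormedAddCommGroup M] [NormedSpace ℝ M]
    (L : (Fin d → ℝ) →L[ℝ] M) (Z : Fin d → ℝ) :
    L Z = ∑ k, Z k • L (Pi.single k 1) := by
  have hZ : Z = ∑ k, Z k • (Pi.single k 1 : Fin d → ℝ) := by
    funext i
    simp [Pi.single_apply, Finset.sum_ite_eq']
  conv_lhs => rw [hZ]
  rw [map_sum]
  simp


theorem line_hasDerivAt (x₀ Z : Fin d → ℝ) {f : (Fin d → ℝ) → ℝ}
    (hf : Differentiable ℝ f) (h : ℝ) :
    HasDerivAt (fun h : ℝ => f (x₀ + h • Z)) (dapp f Z (x₀ + h • Z)) h := by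
  have h1 : HasDerivAt (fun h : ℝ => x₀ + h • Z) Z h := by
    simpa using ((hasDerivAt_id h).smul_const Z).const_add x₀
  exact (hf (x₀ + h • Z)).hasFDerivAt.comp_hasDerivAt h h1

theorem HasDerivAt.ofReal' {f : ℝ → ℝ} {f' x : ℝ} (hf : HasDerivAt f f' x) :
    HasDerivAt (fun x => ((f x : ℝ) : ℂ)) ((f' : ℝ) : ℂ) x := by
  exact hf.ofReal_comp

theorem dapp_expand {f : (Fin d → ℝ) → ℝ} (hf : ContDiff ℝ (⊤ : ℕ∞) f) (x₀ Z w : Fin d → ℝ) :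
    fderiv ℝ (fun x => fderiv ℝ f x Z) x₀ w
      = ∑ k, Z k * fderiv ℝ (fun x => fderiv ℝ f x (Pi.single k 1)) x₀ w := by
  have hdk : ∀ k : Fin d, Differentiable ℝ (fun x => fderiv ℝ f x (Pi.single k 1)) :=
    fun k => ((hf.fderiv_right (m := (⊤ : ℕ∞)) (by simp)).clm_apply contDiff_const).differentiable (by simp)
  have h1 : (fun x => fderiv ℝ f x Z) = fun x => ∑ k, Z k * fderiv ℝ f x (Pi.single k 1) := by
    funext x
    rw [clm_apply_expand (fderiv ℝ f x) Z]
    simp [smul_eq_mul]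
  rw [h1]
  rw [fderiv_fun_sum (fun k _ => ((hdk k) x₀).const_mul (Z k))]
  rw [ContinuousLinearMap.sum_apply]
  refine Finset.sum_congr rfl fun k _ => ?_
  rw [fderiv_const_mul ((hdk k) x₀)]
  simp [smul_eq_mul]

end AuxMag

/-- The second-order coefficient `𝓗^{(2)}` in the expansion of the rescaled magnetic
Schrödinger operator in the Poincaré gauge. -/
theorem rescaled_operator_second_order_coefficient
    (d : ℕ) (hd : 1 ≤ d) (x₀ : Fin d → ℝ)
    (A : Fin d → (Fin d → ℝ) → ℝ) (hA : ∀ j, ContDiff ℝ (⊤ : ℕ∞) (A j))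
    (V : (Fin d → ℝ) → ℝ) (hV : ContDiff ℝ (⊤ : ℕ∞) V)
    (B : Fin d → Fin d → (Fin d → ℝ) → ℝ)
    (hB : ∀ k j x, B k j x =
      fderiv ℝ (A j) x (Pi.single k 1) - fderiv ℝ (A k) x (Pi.single j 1))
    (A' : Fin d → (Fin d → ℝ) → ℝ)
    (hA' : ∀ j Z, A' j Z = ∑ k, (∫ τ in (0:ℝ)..1, B k j (x₀ + τ • Z) * τ) * Z k)
    (P : ℝ → Fin d → ((Fin d → ℝ) → ℂ) → ((Fin d → ℝ) → ℂ))
    (hP : ∀ h j s Z, P h j s Z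
      = fderiv ℝ s Z (Pi.single j 1) - Complex.I * (A' j (h • Z) : ℂ) * s Z)
    (u : (Fin d → ℝ) → ℂ) (hu : ContDiff ℝ (⊤ : ℕ∞) u)
    (Z : Fin d → ℝ)
    (F : ℝ → ℂ)
    (hF : ∀ h : ℝ, F h
      = -(∑ j, P h j (P h j u) Z) + (V (x₀ + h • Z) : ℂ) * u Z) :
    (1 / 2 : ℂ) * iteratedDeriv 2 F 0
      = (2 * Complex.I / 3)
          * (∑ j, ∑ k, ∑ ℓ, ((fderiv ℝ (B k j) x₀ (Pi.single ℓ 1) * Z k * Z ℓ : ℝ) : ℂ)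
              * fderiv ℝ u Z (Pi.single j 1))
        + ((Complex.I / 3) * (((∑ j, ∑ k, fderiv ℝ (B k j) x₀ (Pi.single j 1) * Z k : ℝ)) : ℂ)
            + (((1 / 4 : ℝ) * ∑ j, (∑ k, B k j x₀ * Z k) ^ 2 : ℝ) : ℂ)
            + (((1 / 2 : ℝ) * ∑ k, ∑ ℓ, fderiv ℝ (fun x => fderiv ℝ V x (Pi.single k 1)) x₀
                (Pi.single ℓ 1) * Z k * Z ℓ : ℝ) : ℂ)) * u Z := by
  classical
  -- smoothness of B
  have hBsm : ∀ k j, ContDiff ℝ (⊤ : ℕ∞) (B k j) := by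
    intro k j
    have hfun : B k j = fun x =>
        fderiv ℝ (A j) x (Pi.single k 1) - fderiv ℝ (A k) x (Pi.single j 1) := funext (hB k j)
    rw [hfun]
    exact (((hA j).fderiv_right (by simp)).clm_apply contDiff_const).sub
      (((hA k).fderiv_right (by simp)).clm_apply contDiff_const)
  have hBjj : ∀ j, B j j = fun _ => (0:ℝ) := by
    intro j; funext x; rw [hB j j x, sub_self]
  -- A' as a magPhi sum
  have hA'fun : ∀ j, A' j = fun Y => ∑ k, magPhi x₀ (B k j) 1 Y * Y k := by
    intro j; funext Y; rw [hA' j Y]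
    refine Finset.sum_congr rfl fun k _ => ?_
    rw [magPhi]
    simp [pow_one]
  -- the derivative CLM of A' j at Y
  set LA : Fin d → (Fin d → ℝ) → ((Fin d → ℝ) →L[ℝ] ℝ) := fun j Y =>
    ∑ k, (magPhi x₀ (B k j) 1 Y • (ContinuousLinearMap.proj k : ((i : Fin d) → ℝ) →L[ℝ] ℝ)
      + Y k • (∫ τ in (0:ℝ)..1, (τ ^ (1+1)) • fderiv ℝ (B k j) (x₀ + τ • Y))) with hLAdef
  have hLA : ∀ j Y, HasFDerivAt (A' j) (LA j Y) Y := by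
    intro j Y
    rw [hA'fun j, hLAdef]
    refine HasFDerivAt.fun_sum fun k _ => ?_
    have h1 : HasFDerivAt (fun Y : Fin d → ℝ => Y k)
        (ContinuousLinearMap.proj k : ((i : Fin d) → ℝ) →L[ℝ] ℝ) Y :=
by
      have := (ContinuousLinearMap.proj (R := ℝ) (φ := fun _ : Fin d => ℝ) k).hasFDerivAt (x := Y)
      convert this using 2
      rfl
    exact (magPhi_hasFDerivAt x₀ (hBsm k j) 1 Y).fun_mul h1
  have hLAapp : ∀ j Y w, LA j Y w
      = ∑ k, (magPhi x₀ (B k j) 1 Y * w k + Y k * magPhi x₀ (dapp (B k j) w) 2 Y) := by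
    intro j Y w
    rw [hLAdef]
    rw [ContinuousLinearMap.sum_apply]
    refine Finset.sum_congr rfl fun k _ => ?_
    rw [ContinuousLinearMap.add_apply, ContinuousLinearMap.smul_apply,
      ContinuousLinearMap.smul_apply, ContinuousLinearMap.proj_apply,
      magPhi_fderiv_apply x₀ (hBsm k j) 1 Y w]
    norm_num [smul_eq_mul]
  -- scalar component functions of h
  set m0 : Fin d → Fin d → ℝ → ℝ := fun k j => lineΦ x₀ Z (B k j) 1 with hm0def
  set m1 : Fin d → Fin d → ℝ → ℝ := fun k j => lineΦ x₀ Z (dapp (B k j) Z) 2 with hm1def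
  set m2 : Fin d → Fin d → ℝ → ℝ := fun k j => lineΦ x₀ Z (dapp (dapp (B k j) Z) Z) 3 with hm2def
  set n0 : Fin d → Fin d → ℝ → ℝ :=
    fun k j => lineΦ x₀ Z (dapp (B k j) (Pi.single j 1)) 2 with hn0def
  set n1 : Fin d → Fin d → ℝ → ℝ :=
    fun k j => lineΦ x₀ Z (dapp (dapp (B k j) (Pi.single j 1)) Z) 3 with hn1def
  set ψ : Fin d → ℝ → ℝ := fun j h => ∑ k, m0 k j h * (h * Z k) with hψdef
  set ψd : Fin d → ℝ → ℝ :=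
    fun j h => ∑ k, (m1 k j h * (h * Z k) + m0 k j h * Z k) with hψddef
  set gr : Fin d → ℝ → ℝ :=
    fun j h => (∑ k, (h * Z k) * n0 k j h) + m0 j j h with hgrdef
  set grd : Fin d → ℝ → ℝ :=
    fun j h => (∑ k, ((h * Z k) * n1 k j h + Z k * n0 k j h)) + m1 j j h with hgrddef
  set χ : Fin d → ℝ → ℝ := fun j h => h * gr j h with hχdef
  set χd : Fin d → ℝ → ℝ := fun j h => gr j h + h * grd j h with hχddef
  set u1 : Fin d → ℂ := fun j => fderiv ℝ u Z (Pi.single j 1) with hu1def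
  set u2 : Fin d → ℂ :=
    fun j => fderiv ℝ (fun W => fderiv ℝ u W (Pi.single j 1)) Z (Pi.single j 1) with hu2def
  -- links
  have hψA : ∀ j h, A' j (h • Z) = ψ j h := by
    intro j h
    rw [hA'fun j]
    refine Finset.sum_congr rfl fun k _ => ?_
    rw [Pi.smul_apply, smul_eq_mul]
    rfl
  have hgrA : ∀ j h, LA j (h • Z) (Pi.single j 1) = gr j h := by
    intro j h
    calc (LA j (h • Z)) (Pi.single j 1)
        = ∑ k, (m0 k j h * (Pi.single j 1 : Fin d → ℝ) k + (h * Z k) * n0 k j h) := by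
          rw [hLAapp]
          refine Finset.sum_congr rfl fun k _ => ?_
          rw [Pi.smul_apply, smul_eq_mul]
          rfl
      _ = (∑ k, m0 k j h * (Pi.single j 1 : Fin d → ℝ) k) + ∑ k, (h * Z k) * n0 k j h :=
          Finset.sum_add_distrib
      _ = m0 j j h + ∑ k, (h * Z k) * n0 k j h := by
          congr 1
          rw [Finset.sum_eq_single j (fun k _ hk => by simp [Pi.single_eq_of_ne hk])
            (fun hj => absurd (Finset.mem_univ j) hj)]
          simp only [Pi.single_eq_same, mul_one]
      _ = gr j h := add_comm _ _
  have hudiff : Differentiable ℝ u := hu.differentiable (by simp)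
  have hu2diff : ∀ j : Fin d, Differentiable ℝ (fun W => fderiv ℝ u W (Pi.single j 1)) :=
    fun j => ((hu.fderiv_right (m := (⊤ : ℕ∞)) (by simp)).clm_apply contDiff_const).differentiable (by simp)
  have hterm : ∀ (h : ℝ) (j : Fin d), P h j (P h j u) Z
      = u2 j - 2*Complex.I*((ψ j h : ℝ) : ℂ)*u1 j - Complex.I*((χ j h : ℝ) : ℂ)*u Z
        - ((ψ j h ^ 2 : ℝ) : ℂ) * u Z := by
    intro h j
    have hPu : P h j u = fun W => fderiv ℝ u W (Pi.single j 1)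
        - Complex.I * ((A' j (h • W) : ℝ) : ℂ) * u W := funext fun W => hP h j u W
    have hsm : HasFDerivAt (fun W : Fin d → ℝ => h • W)
        (h • ContinuousLinearMap.id ℝ (Fin d → ℝ)) Z := (hasFDerivAt_id Z).const_smul h
    have hA'c : HasFDerivAt (fun W => A' j (h • W))
        ((LA j (h • Z)).comp (h • ContinuousLinearMap.id ℝ (Fin d → ℝ))) Z :=
      (hLA j (h • Z)).comp Z hsm
    have hRe : HasFDerivAt (fun W => ((A' j (h • W) : ℝ) : ℂ))
        (Complex.ofRealCLM.comp ((LA j (h • Z)).comp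
          (h • ContinuousLinearMap.id ℝ (Fin d → ℝ)))) Z :=
      Complex.ofRealCLM.hasFDerivAt.comp Z hA'c
    have hu' : HasFDerivAt u (fderiv ℝ u Z) Z := (hudiff Z).hasFDerivAt
    have hq : HasFDerivAt (fun W => Complex.I * ((A' j (h • W) : ℝ) : ℂ) * u W)
        ((Complex.I * ((A' j (h • Z) : ℝ) : ℂ)) • fderiv ℝ u Z
          + u Z • (Complex.I • (Complex.ofRealCLM.comp
              ((LA j (h • Z)).comp (h • ContinuousLinearMap.id ℝ (Fin d → ℝ)))))) Z :=
      (hRe.const_mul Complex.I).fun_mul hu'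
    have hdu2 : HasFDerivAt (fun W => fderiv ℝ u W (Pi.single j 1))
        (fderiv ℝ (fun W => fderiv ℝ u W (Pi.single j 1)) Z) Z := (hu2diff j Z).hasFDerivAt
    have hval : HasFDerivAt (P h j u)
        (fderiv ℝ (fun W => fderiv ℝ u W (Pi.single j 1)) Z
          - ((Complex.I * ((A' j (h • Z) : ℝ) : ℂ)) • fderiv ℝ u Z
          + u Z • (Complex.I • (Complex.ofRealCLM.comp
              ((LA j (h • Z)).comp (h • ContinuousLinearMap.id ℝ (Fin d → ℝ))))))) Z := by
      rw [hPu]; exact hdu2.fun_sub hq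
    rw [hP h j (P h j u) Z, hval.fderiv, hP h j u Z]
    simp only [ContinuousLinearMap.sub_apply, ContinuousLinearMap.add_apply,
      ContinuousLinearMap.smul_apply, ContinuousLinearMap.coe_comp', Function.comp_apply,
      Complex.ofRealCLM_apply, ContinuousLinearMap.id_apply]
    rw [map_smul (LA j (h • Z)), hgrA j h, hψA j h]
    simp only [hu1def, hu2def, hχdef, smul_eq_mul]
    push_cast [Complex.ofReal_sum]
    linear_combination ((ψ j h : ℂ))^2 * u Z * Complex.I_sq
  have hFeq : F = fun h =>
      -(∑ j, (u2 j - 2*Complex.I*((ψ j h : ℝ) : ℂ)*u1 j - Complex.I*((χ j h : ℝ) : ℂ)*u Z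
        - ((ψ j h ^ 2 : ℝ) : ℂ) * u Z)) + ((V (x₀ + h • Z) : ℝ) : ℂ) * u Z := by
    funext h
    rw [hF h]
    congr 2
    exact Finset.sum_congr rfl fun j _ => hterm h j
  -- basic scalar derivatives
  have hm0d : ∀ k j (h : ℝ), HasDerivAt (m0 k j) (m1 k j h) h :=
    fun k j h => lineΦ_hasDerivAt x₀ Z (hBsm k j) 1 h
  have hm1d : ∀ k j (h : ℝ), HasDerivAt (m1 k j) (m2 k j h) h :=
    fun k j h => lineΦ_hasDerivAt x₀ Z (dapp_contDiff (hBsm k j) Z) 2 h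
  have hn0d : ∀ k j (h : ℝ), HasDerivAt (n0 k j) (n1 k j h) h :=
    fun k j h => lineΦ_hasDerivAt x₀ Z (dapp_contDiff (hBsm k j) (Pi.single j 1)) 2 h
  have hn1d : ∀ k j (h : ℝ), HasDerivAt (n1 k j)
      (lineΦ x₀ Z (dapp (dapp (dapp (B k j) (Pi.single j 1)) Z) Z) 4 h) h :=
    fun k j h =>
      lineΦ_hasDerivAt x₀ Z (dapp_contDiff (dapp_contDiff (hBsm k j) (Pi.single j 1)) Z) 3 h
  have hψd : ∀ j (h : ℝ), HasDerivAt (ψ j) (ψd j h) h := by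
    intro j h
    simp only [hψdef, hψddef]
    refine HasDerivAt.fun_sum fun k _ => ?_
    have hd := (hm0d k j h).fun_mul ((hasDerivAt_id' _).mul_const (Z k))
    refine hd.congr_deriv ?_
    ring
  have hgrd : ∀ j (h : ℝ), HasDerivAt (gr j) (grd j h) h := by
    intro j h
    simp only [hgrdef, hgrddef]
    refine HasDerivAt.fun_add (HasDerivAt.fun_sum fun k _ => ?_) (hm0d j j h)
    have hd := ((hasDerivAt_id' _).mul_const (Z k)).fun_mul (hn0d k j h)
    refine hd.congr_deriv ?_
    ring
  have hχd : ∀ j (h : ℝ), HasDerivAt (χ j) (χd j h) h := by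
    intro j h
    simp only [hχdef, hχddef]
    have hd := (hasDerivAt_id' _).fun_mul (hgrd j h)
    refine hd.congr_deriv ?_
    ring
  have hVd : Differentiable ℝ V := hV.differentiable (by simp)
  -- first derivative of F everywhere
  have hFd : ∀ h : ℝ, HasDerivAt F
      (-(∑ j, ((0:ℂ) - 2*Complex.I*((ψd j h : ℝ) : ℂ)*u1 j - Complex.I*((χd j h : ℝ) : ℂ)*u Z
        - ((2 * ψ j h * ψd j h : ℝ) : ℂ) * u Z))
        + ((dapp V Z (x₀ + h • Z) : ℝ) : ℂ) * u Z) h := by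
    intro h
    rw [hFeq]
    refine HasDerivAt.fun_add (HasDerivAt.fun_neg (HasDerivAt.fun_sum fun j _ => ?_)) ?_
    · refine (((hasDerivAt_const h (u2 j)).fun_sub ?_).fun_sub ?_).fun_sub ?_
      · exact (((hψd j h).ofReal').const_mul (2*Complex.I)).mul_const (u1 j)
      · exact (((hχd j h).ofReal').const_mul Complex.I).mul_const (u Z)
      · have hsq : HasDerivAt (fun h => ψ j h ^ 2) (2 * ψ j h * ψd j h) h := by
          have hd := (hψd j h).fun_pow 2
          refine hd.congr_deriv ?_
          push_cast
          ring
        exact (hsq.ofReal').mul_const (u Z)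
    · exact ((line_hasDerivAt x₀ Z hVd h).ofReal').mul_const (u Z)
  have hderivF : deriv F = fun h =>
      (-(∑ j, ((0:ℂ) - 2*Complex.I*((ψd j h : ℝ) : ℂ)*u1 j - Complex.I*((χd j h : ℝ) : ℂ)*u Z
        - ((2 * ψ j h * ψd j h : ℝ) : ℂ) * u Z))
        + ((dapp V Z (x₀ + h • Z) : ℝ) : ℂ) * u Z) := funext fun h => (hFd h).deriv
  -- second derivatives at 0
  have hψdd : ∀ j, HasDerivAt (ψd j) (2 * ∑ k, m1 k j 0 * Z k) 0 := by
    intro j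
    simp only [hψddef]
    have hd := HasDerivAt.fun_sum fun k (_ : k ∈ Finset.univ) =>
      ((hm1d k j 0).fun_mul ((hasDerivAt_id' _).mul_const (Z k))).fun_add ((hm0d k j 0).mul_const (Z k))
    refine hd.congr_deriv ?_
    rw [Finset.mul_sum]
    refine Finset.sum_congr rfl fun k _ => ?_
    ring
  have hgrdd : ∀ j, ∃ D, HasDerivAt (grd j) D 0 := by
    intro j
    have hd := (HasDerivAt.fun_sum fun k (_ : k ∈ (Finset.univ : Finset (Fin d))) =>
      (((hasDerivAt_id' (0:ℝ)).mul_const (Z k)).fun_mul (hn1d k j 0)).fun_add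
        (HasDerivAt.const_mul (Z k) (hn0d k j 0))).fun_add (hm1d j j 0)
    rw [hgrddef]
    exact ⟨_, hd⟩
  have hχdd : ∀ j, HasDerivAt (χd j) (2 * grd j 0) 0 := by
    intro j
    obtain ⟨D, hD⟩ := hgrdd j
    simp only [hχddef]
    have hd := (hgrd j 0).fun_add ((hasDerivAt_id' (0:ℝ)).fun_mul hD)
    refine hd.congr_deriv ?_
    ring
  have hψsqd : ∀ j, HasDerivAt (fun h => 2 * ψ j h * ψd j h)
      (2 * ψd j 0 * ψd j 0 + 2 * ψ j 0 * (2 * ∑ k, m1 k j 0 * Z k)) 0 := by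
    intro j
    exact (HasDerivAt.const_mul 2 (hψd j 0)).fun_mul (hψdd j)
  have hVlined : HasDerivAt (fun h : ℝ => dapp V Z (x₀ + h • Z))
      (dapp (dapp V Z) Z (x₀ + (0:ℝ) • Z)) 0 :=
    line_hasDerivAt x₀ Z ((dapp_contDiff hV Z).differentiable (by simp)) 0
  have hFd2 : HasDerivAt (fun h =>
      (-(∑ j, ((0:ℂ) - 2*Complex.I*((ψd j h : ℝ) : ℂ)*u1 j - Complex.I*((χd j h : ℝ) : ℂ)*u Z
        - ((2 * ψ j h * ψd j h : ℝ) : ℂ) * u Z))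
        + ((dapp V Z (x₀ + h • Z) : ℝ) : ℂ) * u Z))
      (-(∑ j, ((0:ℂ) - 2*Complex.I*((2 * ∑ k, m1 k j 0 * Z k : ℝ) : ℂ)*u1 j
          - Complex.I*((2 * grd j 0 : ℝ) : ℂ)*u Z
          - ((2 * ψd j 0 * ψd j 0 + 2 * ψ j 0 * (2 * ∑ k, m1 k j 0 * Z k) : ℝ) : ℂ) * u Z))
        + ((dapp (dapp V Z) Z (x₀ + (0:ℝ) • Z) : ℝ) : ℂ) * u Z) 0 := by
    refine HasDerivAt.fun_add (HasDerivAt.fun_neg (HasDerivAt.fun_sum fun j _ => ?_))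
      (hVlined.ofReal'.mul_const (u Z))
    refine (((hasDerivAt_const (0:ℝ) ((0:ℂ))).fun_sub ?_).fun_sub ?_).fun_sub ?_
    · exact (((hψdd j).ofReal').const_mul (2*Complex.I)).mul_const (u1 j)
    · exact (((hχdd j).ofReal').const_mul Complex.I).mul_const (u Z)
    · exact ((hψsqd j).ofReal').mul_const (u Z)
  have hiter : iteratedDeriv 2 F 0
      = -(∑ j, ((0:ℂ) - 2*Complex.I*((2 * ∑ k, m1 k j 0 * Z k : ℝ) : ℂ)*u1 j
          - Complex.I*((2 * grd j 0 : ℝ) : ℂ)*u Z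
          - ((2 * ψd j 0 * ψd j 0 + 2 * ψ j 0 * (2 * ∑ k, m1 k j 0 * Z k) : ℝ) : ℂ) * u Z))
        + ((dapp (dapp V Z) Z (x₀ + (0:ℝ) • Z) : ℝ) : ℂ) * u Z := by
    rw [iteratedDeriv_succ, iteratedDeriv_one, hderivF]
    exact hFd2.deriv
  -- values at 0
  have hm00 : ∀ k j, m0 k j 0 = B k j x₀ / 2 := by
    intro k j
    simp only [hm0def]
    rw [lineΦ_zero]
    norm_num
  have hm10 : ∀ k j, m1 k j 0 = fderiv ℝ (B k j) x₀ Z / 3 := by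
    intro k j
    simp only [hm1def]
    rw [lineΦ_zero]
    norm_num [dapp]
  have hn00 : ∀ k j, n0 k j 0 = fderiv ℝ (B k j) x₀ (Pi.single j 1) / 3 := by
    intro k j
    simp only [hn0def]
    rw [lineΦ_zero]
    norm_num [dapp]
  have hψ0 : ∀ j, ψ j 0 = 0 := by
    intro j
    simp [hψdef]
  have hψd0 : ∀ j, ψd j 0 = ∑ k, B k j x₀ / 2 * Z k := by
    intro j
    simp only [hψddef, zero_mul, mul_zero, zero_add]
    exact Finset.sum_congr rfl fun k _ => by rw [hm00]
  have hgrd0 : ∀ j, grd j 0 = ∑ k, fderiv ℝ (B k j) x₀ (Pi.single j 1) / 3 * Z k := by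
    intro j
    simp only [hgrddef, zero_mul, mul_zero, zero_add]
    rw [hm10, hBjj j]
    have h0 : fderiv ℝ (fun _ : Fin d → ℝ => (0:ℝ)) x₀ Z = 0 := by
      rw [fderiv_fun_const]
      simp
    rw [h0]
    simp only [zero_div, add_zero]
    exact Finset.sum_congr rfl fun k _ => by rw [hn00]; ring
  have hBexp : ∀ k j, fderiv ℝ (B k j) x₀ Z
      = ∑ ℓ, Z ℓ * fderiv ℝ (B k j) x₀ (Pi.single ℓ 1) := by
    intro k j
    rw [clm_apply_expand (fderiv ℝ (B k j) x₀) Z]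
    simp [smul_eq_mul]
  have hVexp : dapp (dapp V Z) Z (x₀ + (0:ℝ) • Z)
      = ∑ k, ∑ ℓ, fderiv ℝ (fun x => fderiv ℝ V x (Pi.single k 1)) x₀ (Pi.single ℓ 1)
          * Z k * Z ℓ := by
    have hx : x₀ + (0:ℝ) • Z = x₀ := by simp
    rw [hx]
    show fderiv ℝ (fun x => fderiv ℝ V x Z) x₀ Z = _
    rw [dapp_expand hV x₀ Z Z]
    refine Finset.sum_congr rfl fun k _ => ?_
    rw [clm_apply_expand (fderiv ℝ (fun x => fderiv ℝ V x (Pi.single k 1)) x₀) Z,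
      Finset.mul_sum]
    refine Finset.sum_congr rfl fun ℓ _ => ?_
    simp [smul_eq_mul]
    ring
  have hAj : ∀ j, (2 * ∑ k, m1 k j 0 * Z k : ℝ)
      = 2/3 * ∑ k, ∑ ℓ, fderiv ℝ (B k j) x₀ (Pi.single ℓ 1) * Z k * Z ℓ := by
    intro j
    rw [Finset.mul_sum, Finset.mul_sum]
    refine Finset.sum_congr rfl fun k _ => ?_
    rw [hm10 k j, hBexp k j]
    rw [Finset.sum_div, Finset.sum_mul, Finset.mul_sum, Finset.mul_sum]
    refine Finset.sum_congr rfl fun ℓ _ => ?_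
    ring
  have hCj : ∀ j, (2 * grd j 0 : ℝ)
      = 2/3 * ∑ k, fderiv ℝ (B k j) x₀ (Pi.single j 1) * Z k := by
    intro j
    rw [hgrd0 j, Finset.mul_sum, Finset.mul_sum]
    exact Finset.sum_congr rfl fun k _ => by ring
  have hDj : ∀ j, (2 * ψd j 0 * ψd j 0 + 2 * ψ j 0 * (2 * ∑ k, m1 k j 0 * Z k) : ℝ)
      = 1/2 * (∑ k, B k j x₀ * Z k)^2 := by
    intro j
    rw [hψ0 j, hψd0 j]
    have hhalf : (∑ k, B k j x₀ / 2 * Z k) = 1/2 * ∑ k, B k j x₀ * Z k := by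
      rw [Finset.mul_sum]
      exact Finset.sum_congr rfl fun k _ => by ring
    rw [hhalf]
    ring
  rw [hiter, hVexp]
  simp only [hDj]
  simp only [hAj, hCj]
  simp only [hu1def]
  have hswap : ∀ j : Fin d, ((0:ℂ)
      - 2*Complex.I*((2/3 * ∑ k, ∑ ℓ, fderiv ℝ (B k j) x₀ (Pi.single ℓ 1) * Z k * Z ℓ : ℝ):ℂ)
          * (fderiv ℝ u Z) (Pi.single j 1)
      - Complex.I*((2/3 * ∑ k, fderiv ℝ (B k j) x₀ (Pi.single j 1) * Z k : ℝ):ℂ) * u Z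
      - ((1/2 * (∑ k, B k j x₀ * Z k)^2 : ℝ):ℂ) * u Z)
      = -( (4*Complex.I/3) * ∑ k, ∑ ℓ,
            ((fderiv ℝ (B k j) x₀ (Pi.single ℓ 1) * Z k * Z ℓ : ℝ):ℂ)
              * (fderiv ℝ u Z) (Pi.single j 1)
        + ((2*Complex.I/3) * ((∑ k, fderiv ℝ (B k j) x₀ (Pi.single j 1) * Z k : ℝ):ℂ)) * u Z
        + ((1/2 : ℂ) * (((∑ k, B k j x₀ * Z k)^2 : ℝ):ℂ)) * u Z) := by
    intro j
    simp only [← Finset.sum_mul]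
    push_cast [Complex.ofReal_sum]
    ring
  simp only [hswap]
  simp only [Finset.sum_neg_distrib, Finset.sum_add_distrib]
  push_cast [Complex.ofReal_sum]
  simp only [← Finset.sum_mul, ← Finset.mul_sum]
  ring
end

section
/- Let d ≥ 1, fix x₀ ∈ ℝ^d, let A_1,…,A_d : ℝ^d → ℝ and V : ℝ^d → ℝ be smooth, set B_{kj} = ∂A_j/∂x_k − ∂A_k/∂x_j, and define the Poincaré gauge potential A^{(x₀)}_j(Z) = ∑_{k=1}^d (∫_0^1 B_{kj}(x₀ + τZ) τ dτ) Z_k. For l ≥ 1 let A_{j,l} : ℝ^d → ℝ be the degree-l homogeneous Taylor part of A^{(x₀)}_j at 0, A_{j,l}(W) = (1/l!)(d^l/dt^l)|_{t=0} A^{(x₀)}_j(tW), and let T_r(W) = (1/r!)(d^r/dt^r)|_{t=0} V(x₀ + tW) be the degree-r homogeneous Taylor part of V at x₀. Fix a smooth u : ℝ^d → ℂ and Z ∈ ℝ^d, and for h ∈ ℝ set F(h) = −∑_{j=1}^d ((∂/∂Z_j − i A^{(x₀)}_j(h·))² u)(Z) + V(x₀ + hZ) u(Z). Then for every integer r ≥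 1, (1/r!) F^{(r)}(0) = 2i ∑_{j=1}^d A_{j,r}(Z) (∂u/∂Z_j)(Z) + [ i ∑_{j=1}^d (∂A_{j,r}/∂Z_j)(Z) + ∑_{j=1}^d ∑_{l=1}^{r−1} A_{j,l}(Z) A_{j,r−l}(Z) + T_r(Z) ] u(Z). -/
open scoped BigOperators
open scoped ContDiff

namespace MagAux


variable {F : Type*} [NormedAddCommGroup F] [NormedSpace ℝ F]

lemma cd_nat {f : ℝ → F} (hf : ContDiff ℝ ∞ f) (n : ℕ) : ContDiff ℝ (n : WithTop ℕ∞) f :=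
  hf.of_le (by exact_mod_cast le_top)

lemma itd_add {f g : ℝ → F} (hf : ContDiff ℝ ∞ f) (hg : ContDiff ℝ ∞ g) (n : ℕ) (x : ℝ) :
    iteratedDeriv n (fun y => f y + g y) x = iteratedDeriv n f x + iteratedDeriv n g x := by
  rw [← iteratedDerivWithin_univ, ← iteratedDerivWithin_univ, ← iteratedDerivWithin_univ]
  exact iteratedDerivWithin_add (Set.mem_univ x) uniqueDiffOn_univ
    (cd_nat hf n).contDiffWithinAt (cd_nat hg n).contDiffWithinAt

lemma itd_smul {R : Type*} [Semiring R] [Module R F] [SMulCommClass ℝ R F]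
    [ContinuousConstSMul R F] {f : ℝ → F} (hf : ContDiff ℝ ∞ f) (c : R) (n : ℕ) (x : ℝ) :
    iteratedDeriv n (fun y => c • f y) x = c • iteratedDeriv n f x := by
  rw [← iteratedDerivWithin_univ, ← iteratedDerivWithin_univ]
  exact iteratedDerivWithin_const_smul (Set.mem_univ x) uniqueDiffOn_univ c (cd_nat hf n).contDiffWithinAt

lemma itd_zero_fun (n : ℕ) (x : ℝ) : iteratedDeriv n (fun _ : ℝ => (0 : F)) x = 0 := by
  induction n generalizing x with
  | zero => simp [iteratedDeriv_zero]
  | succ n ih =>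
    rw [iteratedDeriv_succ']
    simp only [deriv_const']
    exact ih x

lemma itd_const (n : ℕ) (hn : 1 ≤ n) (c : F) (x : ℝ) :
    iteratedDeriv n (fun _ : ℝ => c) x = 0 := by
  obtain ⟨m, rfl⟩ : ∃ m, n = m + 1 := ⟨n - 1, by omega⟩
  rw [iteratedDeriv_succ']
  simp only [deriv_const']
  exact itd_zero_fun m x

lemma itd_sum {ι : Type*} (s : Finset ι) (f : ι → ℝ → F) (hf : ∀ i, ContDiff ℝ ∞ (f i))
    (n : ℕ) (x : ℝ) :
    iteratedDeriv n (fun y => ∑ i ∈ s, f i y) x = ∑ i ∈ s, iteratedDeriv n (f i) x := by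
  classical
  induction s using Finset.induction with
  | empty => simpa using itd_zero_fun n x
  | insert _ _ hnotmem ih =>
    rename_i a s
    rw [Finset.sum_insert hnotmem]
    have : (fun y => ∑ i ∈ insert a s, f i y) = fun y => f a y + ∑ i ∈ s, f i y := by
      funext y; rw [Finset.sum_insert hnotmem]
    rw [this, itd_add (hf a) (ContDiff.sum fun i _ => hf i) n x, ih]

lemma itd_ofReal {f : ℝ → ℝ} (hf : ContDiff ℝ ∞ f) (n : ℕ) (x : ℝ) :
    iteratedDeriv n (fun y => (f y : ℂ)) x = ((iteratedDeriv n f x : ℝ) : ℂ) := by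
  induction n generalizing f x with
  | zero => simp
  | succ n ih =>
    rw [iteratedDeriv_succ', iteratedDeriv_succ']
    have hd : deriv (fun y => (f y : ℂ)) = fun y => ((deriv f y : ℝ) : ℂ) := by
      funext y
      exact (((hf.differentiable (by norm_num)) y).hasDerivAt.ofReal_comp).deriv
    rw [hd]
    exact ih (contDiff_infty_iff_deriv.mp hf).2 x




lemma pascal_sum (a b : ℕ → ℝ) (n : ℕ) :
    ∑ i ∈ Finset.range (n+1), (n.choose i : ℝ) * (a (i+1) * b (n-i))
      + ∑ i ∈ Finset.range (n+1), (n.choose i : ℝ) * (a i * b (n+1-i))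
    = ∑ i ∈ Finset.range (n+2), ((n+1).choose i : ℝ) * (a i * b (n+1-i)) := by
  rw [Finset.sum_range_succ' (fun i => ((n+1).choose i : ℝ) * (a i * b (n+1-i))) (n+1)]
  have h1 : ∀ i ∈ Finset.range (n+1),
      (((n+1).choose (i+1) : ℝ)) * (a (i+1) * b (n+1-(i+1)))
        = (n.choose i : ℝ) * (a (i+1) * b (n-i)) + (n.choose (i+1) : ℝ) * (a (i+1) * b (n-i)) := by
    intro i hi
    have : n + 1 - (i+1) = n - i := by omega
    rw [this, Nat.choose_succ_succ]
    push_cast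
    ring
  rw [Finset.sum_congr rfl h1, Finset.sum_add_distrib]
  have h2 : ∑ i ∈ Finset.range (n+1), (n.choose (i+1) : ℝ) * (a (i+1) * b (n-i))
      = ∑ i ∈ Finset.range n, (n.choose (i+1) : ℝ) * (a (i+1) * b (n-i)) := by
    rw [Finset.sum_range_succ]
    simp
  have h3 : ∑ i ∈ Finset.range (n+1), (n.choose i : ℝ) * (a i * b (n+1-i))
      = ∑ i ∈ Finset.range n, (n.choose (i+1) : ℝ) * (a (i+1) * b (n-i))
        + (n.choose 0 : ℝ) * (a 0 * b (n+1)) := by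
    rw [Finset.sum_range_succ' (fun i => (n.choose i : ℝ) * (a i * b (n+1-i))) n]
    congr 1
    refine Finset.sum_congr rfl fun i hi => ?_
    have : n + 1 - (i+1) = n - i := by omega
    rw [this]
  rw [h2, h3]
  simp
  ring

lemma deriv_smooth {f : ℝ → F} (hf : ContDiff ℝ ∞ f) : ContDiff ℝ ∞ (deriv f) :=
  (contDiff_infty_iff_deriv.mp hf).2

lemma itd_mul {f g : ℝ → ℝ} (hf : ContDiff ℝ ∞ f) (hg : ContDiff ℝ ∞ g) (n : ℕ) (x : ℝ) :
    iteratedDeriv n (fun y => f y * g y) x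
      = ∑ i ∈ Finset.range (n + 1),
          (n.choose i : ℝ) * (iteratedDeriv i f x * iteratedDeriv (n - i) g x) := by
  induction n generalizing f g with
  | zero => simp
  | succ n ih =>
    rw [iteratedDeriv_succ']
    have hder : deriv (fun y => f y * g y)
        = fun y => deriv f y * g y + f y * deriv g y := by
      funext y
      exact deriv_mul ((hf.differentiable (by norm_num)) y) ((hg.differentiable (by norm_num)) y)
    rw [hder, itd_add (((deriv_smooth hf).mul hg)) (hf.mul (deriv_smooth hg)) n x,
      ih (deriv_smooth hf) hg, ih hf (deriv_smooth hg)]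
    have e1 : ∀ i, iteratedDeriv i (deriv f) x = iteratedDeriv (i+1) f x := by
      intro i; rw [iteratedDeriv_succ']
    have e2 : ∀ i ∈ Finset.range (n+1),
        (n.choose i : ℝ) * (iteratedDeriv i f x * iteratedDeriv (n - i) (deriv g) x)
          = (n.choose i : ℝ) * (iteratedDeriv i f x * iteratedDeriv (n + 1 - i) g x) := by
      intro i hi
      have hi' : i ≤ n := by simpa [Nat.lt_succ_iff] using hi
      have : n + 1 - i = (n - i) + 1 := by omega
      rw [this, iteratedDeriv_succ']
    simp only [e1]
    rw [Finset.sum_congr rfl e2]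
    exact pascal_sum (fun i => iteratedDeriv i f x) (fun i => iteratedDeriv i g x) n



variable {E : Type} [NormedAddCommGroup E] [NormedSpace ℝ E] [FiniteDimensional ℝ E]

private lemma hasFDerivAt_slice {G : Type} [NormedAddCommGroup G] [NormedSpace ℝ G]
    {f : ℝ × E → G} (hf : Differentiable ℝ f) (t : ℝ) (x : E) :
    HasFDerivAt (fun y => f (t, y))
      ((fderiv ℝ f (t, x)).comp (ContinuousLinearMap.inr ℝ ℝ E)) x :=
  ((hf (t, x)).hasFDerivAt).comp x (hasFDerivAt_prodMk_right t x)

lemma contDiff_nat_parametric_integral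
    (n : ℕ) {G : Type} [NormedAddCommGroup G] [NormedSpace ℝ G] [CompleteSpace G]
    (f : ℝ × E → G) (hf : ContDiff ℝ ∞ f) :
    ContDiff ℝ (n : WithTop ℕ∞) (fun x : E => ∫ τ in (0:ℝ)..1, f (τ, x)) := by
  induction n generalizing G with
  | zero =>
    rw [show ((0:ℕ) : WithTop ℕ∞) = 0 from rfl, contDiff_zero]
    exact intervalIntegral.continuous_parametric_intervalIntegral_of_continuous
      (f := fun x τ => f (τ, x))
      (by exact hf.continuous.comp (continuous_snd.prodMk continuous_fst)) continuous_const
  | succ n ih =>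
    set f' : ℝ × E → (E →L[ℝ] G) :=
      fun p => (fderiv ℝ f p).comp (ContinuousLinearMap.inr ℝ ℝ E) with hf'def
    have hf' : ContDiff ℝ ∞ f' :=
      ContDiff.clm_comp (hf.fderiv_right (by simp)) contDiff_const
    have key : ∀ x₀ : E, HasFDerivAt (fun x : E => ∫ τ in (0:ℝ)..1, f (τ, x))
        (∫ τ in (0:ℝ)..1, f' (τ, x₀)) x₀ := by
      intro x₀
      have hcomp : IsCompact ((Set.Icc (0:ℝ) 1) ×ˢ Metric.closedBall x₀ 1) :=
        isCompact_Icc.prod (isCompact_closedBall x₀ 1)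
      obtain ⟨C, hC⟩ := hcomp.exists_bound_of_continuousOn
        (hf'.continuous.continuousOn (s := (Set.Icc (0:ℝ) 1) ×ˢ Metric.closedBall x₀ 1))
      refine intervalIntegral.hasFDerivAt_integral_of_dominated_of_fderiv_le
        (F := fun x τ => f (τ, x)) (F' := fun x τ => f' (τ, x)) (bound := fun _ => C)
        (μ := MeasureTheory.volume) (s := Metric.ball x₀ 1) (Metric.ball_mem_nhds x₀ one_pos) ?_ ?_ ?_ ?_ ?_ ?_
      · exact Filter.Eventually.of_forall fun x =>
          (hf.continuous.comp (continuous_id.prodMk continuous_const)).aestronglyMeasurable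
      · exact (hf.continuous.comp (continuous_id.prodMk continuous_const)).intervalIntegrable 0 1
      · haveI : SecondCountableTopologyEither ℝ (E →L[ℝ] G) :=
          secondCountableTopologyEither_of_left ℝ _
        exact (hf'.continuous.comp (continuous_id.prodMk continuous_const)).aestronglyMeasurable
      · refine Filter.Eventually.of_forall fun τ hτ x hx => hC (τ, x) ?_
        have hτ' : τ ∈ Set.Icc (0:ℝ) 1 := by
          rw [Set.uIoc_of_le (by norm_num : (0:ℝ) ≤ 1)] at hτ
          exact ⟨le_of_lt hτ.1, hτ.2⟩
        exact Set.mk_mem_prod hτ' (Metric.ball_subset_closedBall hx)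
      · exact intervalIntegrable_const
      · exact Filter.Eventually.of_forall fun τ hτ x hx =>
          hasFDerivAt_slice (hf.differentiable (by norm_num)) τ x
    have hdiff : Differentiable ℝ (fun x : E => ∫ τ in (0:ℝ)..1, f (τ, x)) :=
      fun x => (key x).differentiableAt
    rw [show ((n+1:ℕ) : WithTop ℕ∞) = (n : WithTop ℕ∞) + 1 by push_cast; ring,
      contDiff_succ_iff_fderiv]
    refine ⟨hdiff, by simp, ?_⟩
    have : (fderiv ℝ fun x : E => ∫ τ in (0:ℝ)..1, f (τ, x))
        = fun x₀ => ∫ τ in (0:ℝ)..1, f' (τ, x₀) := funext fun x₀ => (key x₀).fderiv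
    rw [this]
    exact ih (G := E →L[ℝ] G) f' hf'

lemma contDiff_parametric_integral
    {G : Type} [NormedAddCommGroup G] [NormedSpace ℝ G] [CompleteSpace G]
    (f : ℝ × E → G) (hf : ContDiff ℝ ∞ f) :
    ContDiff ℝ ∞ (fun x : E => ∫ τ in (0:ℝ)..1, f (τ, x)) := by
  rw [show ((⊤:ℕ∞) : WithTop ℕ∞) = ∞ from rfl, contDiff_infty]
  exact fun n => contDiff_nat_parametric_integral n f hf



variable {E : Type} [NormedAddCommGroup E] [NormedSpace ℝ E]

/-- directional derivative in a fixed direction `w`, as operator on functions on `ℝ × E`. -/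
noncomputable def Dw (w : ℝ × E) (φ : ℝ × E → ℝ) : ℝ × E → ℝ := fun p => fderiv ℝ φ p w

lemma Dw_smooth {φ : ℝ × E → ℝ} (hφ : ContDiff ℝ ∞ φ) (w : ℝ × E) :
    ContDiff ℝ ∞ (Dw w φ) :=
  (hφ.fderiv_right (by simp)).clm_apply contDiff_const

lemma fderiv_Dw {φ : ℝ × E → ℝ} (hφ : ContDiff ℝ ∞ φ) (w z p : ℝ × E) :
    fderiv ℝ (Dw w φ) p z = fderiv ℝ (fderiv ℝ φ) p z w := by
  unfold Dw
  rw [fderiv_clm_apply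
    (((hφ.fderiv_right (m := ∞) (by simp)).differentiable (by norm_num)) p)
    (differentiableAt_const w)]
  simp

lemma Dw_comm {φ : ℝ × E → ℝ} (hφ : ContDiff ℝ ∞ φ) (w₁ w₂ : ℝ × E) (p : ℝ × E) :
    Dw w₁ (Dw w₂ φ) p = Dw w₂ (Dw w₁ φ) p := by
  show fderiv ℝ (Dw w₂ φ) p w₁ = fderiv ℝ (Dw w₁ φ) p w₂
  rw [fderiv_Dw hφ w₂ w₁ p, fderiv_Dw hφ w₁ w₂ p]
  exact (hφ.contDiffAt.isSymmSndFDerivAt (by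
    rw [minSmoothness_of_isRCLikeNormedField]
    rw [show ((2:WithTop ℕ∞)) = (((2:ℕ):ℕ∞):WithTop ℕ∞) by norm_num]
    exact_mod_cast le_top)).eq w₁ w₂

/-- iterated `t`-derivative -/
noncomputable def DtIter : ℕ → (ℝ × E → ℝ) → (ℝ × E → ℝ)
  | 0, φ => φ
  | n + 1, φ => DtIter n (Dw (1, 0) φ)

lemma DtIter_smooth {φ : ℝ × E → ℝ} (hφ : ContDiff ℝ ∞ φ) (n : ℕ) :
    ContDiff ℝ ∞ (DtIter n φ) := by
  induction n generalizing φ with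
  | zero => exact hφ
  | succ n ih => exact ih (Dw_smooth hφ _)

lemma DtIter_succ_left {φ : ℝ × E → ℝ} (n : ℕ) :
    DtIter (n + 1) φ = DtIter n (Dw (1, 0) φ) := rfl

lemma DtIter_succ_right {φ : ℝ × E → ℝ} (hφ : ContDiff ℝ ∞ φ) (n : ℕ) :
    DtIter (n + 1) φ = Dw (1, 0) (DtIter n φ) := by
  induction n generalizing φ with
  | zero => rfl
  | succ n ih =>
    rw [DtIter_succ_left, ih (Dw_smooth hφ _)]
    rfl

lemma Dw_DtIter_comm {φ : ℝ × E → ℝ} (hφ : ContDiff ℝ ∞ φ) (w : ℝ × E) (n : ℕ) :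
    Dw w (DtIter n φ) = DtIter n (Dw w φ) := by
  induction n generalizing φ with
  | zero => rfl
  | succ n ih =>
    rw [DtIter_succ_right hφ n, DtIter_succ_right (Dw_smooth hφ w) n, ← ih hφ]
    funext p
    exact Dw_comm (DtIter_smooth hφ n) w (1,0) p

lemma hasDerivAt_slice_t {χ : ℝ × E → ℝ} (hχ : Differentiable ℝ χ) (t : ℝ) (W : E) :
    HasDerivAt (fun t' => χ (t', W)) (Dw (1, 0) χ (t, W)) t := by
  have hinner : HasDerivAt (fun t' : ℝ => (t', W)) ((1 : ℝ), (0 : E)) t :=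
    (hasDerivAt_id t).prodMk (hasDerivAt_const t W)
  exact (hχ (t, W)).hasFDerivAt.comp_hasDerivAt t hinner

lemma deriv_slice_t {χ : ℝ × E → ℝ} (hχ : Differentiable ℝ χ) (W : E) :
    deriv (fun t' => χ (t', W)) = fun t => Dw (1, 0) χ (t, W) := by
  funext t
  exact (hasDerivAt_slice_t hχ t W).deriv

lemma itd_slice {φ : ℝ × E → ℝ} (hφ : ContDiff ℝ ∞ φ) (n : ℕ) (W : E) (t : ℝ) :
    iteratedDeriv n (fun t' => φ (t', W)) t = DtIter n φ (t, W) := by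
  induction n generalizing φ with
  | zero => simp [DtIter]
  | succ n ih =>
    rw [iteratedDeriv_succ', deriv_slice_t (hφ.differentiable (by norm_num)) W,
      DtIter_succ_left]
    exact ih (Dw_smooth hφ _)

lemma hasFDerivAt_slice_E {χ : ℝ × E → ℝ} (hχ : Differentiable ℝ χ) (t : ℝ) (W : E) :
    HasFDerivAt (fun W' => χ (t, W'))
      ((fderiv ℝ χ (t, W)).comp (ContinuousLinearMap.inr ℝ ℝ E)) W :=
  ((hχ (t, W)).hasFDerivAt).comp W (hasFDerivAt_prodMk_right t W)

lemma fderiv_slice_E {χ : ℝ × E → ℝ} (hχ : Differentiable ℝ χ) (t : ℝ) (W : E) (v : E) :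
    fderiv ℝ (fun W' => χ (t, W')) W v = Dw (0, v) χ (t, W) := by
  rw [(hasFDerivAt_slice_E hχ t W).fderiv]
  rfl

/-- Key swap: the `v`-directional derivative (in `W`) of the `n`-th Taylor coefficient of
`t ↦ φ (t, W)` equals the `n`-th Taylor coefficient of `t ↦ ∂_v φ(t, ·)`. -/
lemma key_swap {φ : ℝ × E → ℝ} (hφ : ContDiff ℝ ∞ φ) (n : ℕ) (Z v : E) :
    fderiv ℝ (fun W => iteratedDeriv n (fun t' => φ (t', W)) 0) Z v
      = iteratedDeriv n (fun t' => fderiv ℝ (fun W' => φ (t', W')) Z v) 0 := by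
  have h1 : (fun W => iteratedDeriv n (fun t' => φ (t', W)) 0)
      = fun W => DtIter n φ (0, W) := by
    funext W; exact itd_slice hφ n W 0
  have h2 : (fun t' => fderiv ℝ (fun W' => φ (t', W')) Z v)
      = fun t' => Dw (0, v) φ (t', Z) := by
    funext t'; exact fderiv_slice_E (hφ.differentiable (by norm_num)) t' Z v
  rw [h1, h2, itd_slice (Dw_smooth hφ _) n Z 0,
    fderiv_slice_E ((DtIter_smooth hφ n).differentiable (by norm_num)) 0 Z v]
  show Dw (0, v) (DtIter n φ) (0, Z) = DtIter n (Dw (0, v) φ) (0, Z)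
  rw [Dw_DtIter_comm hφ (0, v) n]


lemma itd_cmul {f : ℝ → ℂ} (hf : ContDiff ℝ ∞ f) (c : ℂ) (n : ℕ) (x : ℝ) :
    iteratedDeriv n (fun y => c * f y) x = c * iteratedDeriv n f x := by
  simpa [smul_eq_mul] using itd_smul hf c n x

end MagAux
open MagAux


/-- The general coefficient `𝓗^{(r)}` in the formal expansion of the rescaled magnetic
Schrödinger operator in the Poincaré gauge: `(1/r!) F^{(r)}(0)` is a first-order operator
whose coefficients are given by the homogeneous Taylor parts `A_{j,l}` of the gauge potential
and `T_r` of the potential `V`. -/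
theorem rescaled_operator_general_coefficient
    (d : ℕ) (hd : 1 ≤ d) (x₀ : Fin d → ℝ)
    (A : Fin d → (Fin d → ℝ) → ℝ) (hA : ∀ j, ContDiff ℝ (⊤ : ℕ∞) (A j))
    (V : (Fin d → ℝ) → ℝ) (hV : ContDiff ℝ (⊤ : ℕ∞) V)
    (B : Fin d → Fin d → (Fin d → ℝ) → ℝ)
    (hB : ∀ k j x, B k j x =
      fderiv ℝ (A j) x (Pi.single k 1) - fderiv ℝ (A k) x (Pi.single j 1))
    (A' : Fin d → (Fin d → ℝ) → ℝ)
    (hA' : ∀ j Z, A' j Z = ∑ k, (∫ τ in (0:ℝ)..1, B k j (x₀ + τ • Z) * τ) * Z k)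
    (A₁ : Fin d → ℕ → (Fin d → ℝ) → ℝ)
    (hA₁ : ∀ j l W, A₁ j l W
      = (1 / (Nat.factorial l) : ℝ) * iteratedDeriv l (fun t : ℝ => A' j (t • W)) 0)
    (T : ℕ → (Fin d → ℝ) → ℝ)
    (hT : ∀ r W, T r W
      = (1 / (Nat.factorial r) : ℝ) * iteratedDeriv r (fun t : ℝ => V (x₀ + t • W)) 0)
    (P : ℝ → Fin d → ((Fin d → ℝ) → ℂ) → ((Fin d → ℝ) → ℂ))
    (hP : ∀ h j s Z, P h j s Z
      = fderiv ℝ s Z (Pi.single j 1) - Complex.I * (A' j (h • Z) : ℂ) * s Z)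
    (u : (Fin d → ℝ) → ℂ) (hu : ContDiff ℝ (⊤ : ℕ∞) u)
    (Z : Fin d → ℝ)
    (F : ℝ → ℂ)
    (hF : ∀ h : ℝ, F h
      = -(∑ j, P h j (P h j u) Z) + (V (x₀ + h • Z) : ℂ) * u Z) :
    ∀ r : ℕ, 1 ≤ r →
      (1 / (Nat.factorial r) : ℂ) * iteratedDeriv r F 0
        = 2 * Complex.I * (∑ j, (A₁ j r Z : ℂ) * fderiv ℝ u Z (Pi.single j 1))
          + (Complex.I * (((∑ j, fderiv ℝ (A₁ j r) Z (Pi.single j 1) : ℝ)) : ℂ)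
              + (((∑ j, ∑ l ∈ Finset.Ico 1 r, A₁ j l Z * A₁ j (r - l) Z : ℝ)) : ℂ)
              + (T r Z : ℂ)) * u Z := by
  intro r hr
  -- basic smoothness
  have hu' : ContDiff ℝ ∞ u := hu.of_le (by simp)
  have hV' : ContDiff ℝ ∞ V := hV.of_le (by simp)
  have hAs : ∀ j, ContDiff ℝ ∞ (A j) := fun j => (hA j).of_le (by simp)
  have hBs : ∀ k j, ContDiff ℝ ∞ (B k j) := by
    intro k j
    have hfun : B k j = fun x => fderiv ℝ (A j) x (Pi.single k 1)
        - fderiv ℝ (A k) x (Pi.single j 1) := funext fun x => hB k j x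
    rw [hfun]
    exact (((hAs j).fderiv_right (m := ∞) (by simp)).clm_apply contDiff_const).sub
      (((hAs k).fderiv_right (m := ∞) (by simp)).clm_apply contDiff_const)
  have hA's : ∀ j, ContDiff ℝ ∞ (A' j) := by
    intro j
    have hfun : A' j = fun Z => ∑ k, (∫ τ in (0:ℝ)..1, B k j (x₀ + τ • Z) * τ) * Z k :=
      funext fun Z => hA' j Z
    rw [hfun]
    refine ContDiff.sum fun k _ => ContDiff.mul ?_ ?_
    · exact contDiff_parametric_integral
        (fun p : ℝ × (Fin d → ℝ) => B k j (x₀ + p.1 • p.2) * p.1)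
        (((hBs k j).comp (contDiff_const.add (contDiff_fst.smul contDiff_snd))).mul contDiff_fst)
    · exact (ContinuousLinearMap.proj (R := ℝ) (φ := fun _ : Fin d => ℝ) k).contDiff
  have hA'0 : ∀ j, A' j 0 = 0 := by
    intro j; rw [hA' j 0]; simp
  -- the scaled potential as a smooth function on ℝ × E
  have hφ : ∀ j, ContDiff ℝ ∞ (fun p : ℝ × (Fin d → ℝ) => A' j (p.1 • p.2)) :=
    fun j => (hA's j).comp (contDiff_fst.smul contDiff_snd)
  have hφd : ∀ j, Differentiable ℝ (fun p : ℝ × (Fin d → ℝ) => A' j (p.1 • p.2)) :=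
    fun j => (hφ j).differentiable (by norm_num)
  have ha_smooth : ∀ j, ContDiff ℝ ∞ (fun h : ℝ => A' j (h • Z)) :=
    fun j => (hA's j).comp (contDiff_id.smul contDiff_const)
  -- identification of the gauge-derivative coefficient with a directional derivative
  have hq_eq : ∀ j (h : ℝ),
      fderiv ℝ (fun Z' => A' j (h • Z')) Z (Pi.single j 1)
        = Dw ((0:ℝ), Pi.single j (1:ℝ)) (fun p : ℝ × (Fin d → ℝ) => A' j (p.1 • p.2)) (h, Z) :=
    fun j h => fderiv_slice_E (hφd j) h Z (Pi.single j 1)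
  have hq_smooth : ∀ j, ContDiff ℝ ∞
      (fun h : ℝ => fderiv ℝ (fun Z' => A' j (h • Z')) Z (Pi.single j 1)) := by
    intro j
    have : (fun h : ℝ => fderiv ℝ (fun Z' => A' j (h • Z')) Z (Pi.single j 1))
        = fun h : ℝ => Dw ((0:ℝ), Pi.single j (1:ℝ))
            (fun p : ℝ × (Fin d → ℝ) => A' j (p.1 • p.2)) (h, Z) :=
      funext fun h => hq_eq j h
    rw [this]
    exact (Dw_smooth (hφ j) _).comp (contDiff_id.prodMk contDiff_const)
  -- divergence identity
  have hq_id : ∀ j, fderiv ℝ (A₁ j r) Z (Pi.single j 1)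
      = (1 / (Nat.factorial r) : ℝ) * iteratedDeriv r
          (fun h : ℝ => fderiv ℝ (fun Z' => A' j (h • Z')) Z (Pi.single j 1)) 0 := by
    intro j
    have hgd : (fun W => iteratedDeriv r (fun t : ℝ => A' j (t • W)) 0)
        = fun W => DtIter r (fun p : ℝ × (Fin d → ℝ) => A' j (p.1 • p.2)) (0, W) :=
      funext fun W => itd_slice (hφ j) r W 0
    have hA₁fun : A₁ j r = fun W => (1 / (Nat.factorial r) : ℝ)
        * iteratedDeriv r (fun t : ℝ => A' j (t • W)) 0 := funext fun W => hA₁ j r W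
    have hDt : Differentiable ℝ
        (fun W => DtIter r (fun p : ℝ × (Fin d → ℝ) => A' j (p.1 • p.2)) (0, W)) :=
      ((DtIter_smooth (hφ j) r).comp (contDiff_const.prodMk contDiff_id)).differentiable
        (by norm_num)
    rw [hA₁fun]
    have hrw : (fun W => (1 / (Nat.factorial r) : ℝ)
        * iteratedDeriv r (fun t : ℝ => A' j (t • W)) 0)
        = fun W => (1 / (Nat.factorial r) : ℝ)
            * DtIter r (fun p : ℝ × (Fin d → ℝ) => A' j (p.1 • p.2)) (0, W) := by
      funext W; rw [congrFun hgd W]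
    rw [hrw, fderiv_const_mul (hDt Z) ((1 : ℝ) / (Nat.factorial r))]
    rw [ContinuousLinearMap.smul_apply, smul_eq_mul]
    congr 1
    calc fderiv ℝ (fun W => DtIter r (fun p : ℝ × (Fin d → ℝ) => A' j (p.1 • p.2)) (0, W)) Z
          (Pi.single j 1)
        = Dw ((0:ℝ), Pi.single j (1:ℝ))
            (DtIter r (fun p : ℝ × (Fin d → ℝ) => A' j (p.1 • p.2))) (0, Z) :=
          fderiv_slice_E ((DtIter_smooth (hφ j) r).differentiable (by norm_num)) 0 Z _
      _ = DtIter r (Dw ((0:ℝ), Pi.single j (1:ℝ))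
            (fun p : ℝ × (Fin d → ℝ) => A' j (p.1 • p.2))) (0, Z) :=
          congrFun (Dw_DtIter_comm (hφ j) _ r) (0, Z)
      _ = iteratedDeriv r (fun t : ℝ => Dw ((0:ℝ), Pi.single j (1:ℝ))
            (fun p : ℝ × (Fin d → ℝ) => A' j (p.1 • p.2)) (t, Z)) 0 :=
          (itd_slice (Dw_smooth (hφ j) _) r Z 0).symm
      _ = iteratedDeriv r
            (fun h : ℝ => fderiv ℝ (fun Z' => A' j (h • Z')) Z (Pi.single j 1)) 0 := by
          congr 1
          funext t
          exact (hq_eq j t).symm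
  -- pointwise formula for the double covariant derivative
  have hPP : ∀ (h : ℝ) j, -(P h j (P h j u) Z)
      = -(fderiv ℝ (fun Z' => fderiv ℝ u Z' (Pi.single j 1)) Z (Pi.single j 1))
        + (Complex.I * u Z)
            * ((fderiv ℝ (fun Z' => A' j (h • Z')) Z (Pi.single j 1) : ℝ) : ℂ)
        + (2 * Complex.I * fderiv ℝ u Z (Pi.single j 1)) * ((A' j (h • Z) : ℝ) : ℂ)
        + u Z * ((A' j (h • Z) * A' j (h • Z) : ℝ) : ℂ) := by
    intro h j
    have hud : Differentiable ℝ u := hu'.differentiable (by norm_num)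
    have hAdiff : Differentiable ℝ (fun Z' : Fin d → ℝ => A' j (h • Z')) :=
      ((hA's j).comp (f := fun Z' : Fin d → ℝ => h • Z') (contDiff_const_smul h)).differentiable (by norm_num)
    have hcdiff : Differentiable ℝ (fun Z' : Fin d → ℝ => ((A' j (h • Z') : ℝ) : ℂ)) :=
      fun x => (Complex.ofRealCLM.hasFDerivAt.comp x (hAdiff x).hasFDerivAt).differentiableAt
    have hc_fderiv : fderiv ℝ (fun Z' : Fin d → ℝ => ((A' j (h • Z') : ℝ) : ℂ)) Z
          (Pi.single j 1)
        = ((fderiv ℝ (fun Z' => A' j (h • Z')) Z (Pi.single j 1) : ℝ) : ℂ) := by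
      rw [show (fun Z' : Fin d → ℝ => ((A' j (h • Z') : ℝ) : ℂ))
          = ⇑Complex.ofRealCLM ∘ (fun Z' => A' j (h • Z')) from rfl,
        (Complex.ofRealCLM.hasFDerivAt.comp Z (hAdiff Z).hasFDerivAt).fderiv]
      rfl
    have hg1 : Differentiable ℝ (fun Z' : Fin d → ℝ => fderiv ℝ u Z' (Pi.single j 1)) :=
      ((hu'.fderiv_right (m := ∞) (by simp)).clm_apply contDiff_const).differentiable
        (by norm_num)
    have hg2 : Differentiable ℝ
        (fun Z' : Fin d → ℝ => Complex.I * ((A' j (h • Z') : ℝ) : ℂ) * u Z') :=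
      ((differentiable_const _).mul hcdiff).mul hud
    have hPu : P h j u = fun Z' => fderiv ℝ u Z' (Pi.single j 1)
        - Complex.I * ((A' j (h • Z') : ℝ) : ℂ) * u Z' := funext fun Z' => hP h j u Z'
    rw [hP h j (P h j u) Z, hPu]
    rw [fderiv_fun_sub (hg1 Z) (hg2 Z)]
    have hmul : fderiv ℝ (fun Z' : Fin d → ℝ => Complex.I * ((A' j (h • Z') : ℝ) : ℂ) * u Z') Z
        = (Complex.I * ((A' j (h • Z) : ℝ) : ℂ)) • fderiv ℝ u Z
          + u Z • (Complex.I • fderiv ℝ (fun Z' : Fin d → ℝ => ((A' j (h • Z') : ℝ) : ℂ)) Z) := by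
      rw [fderiv_fun_mul (c := fun Z' : Fin d → ℝ => Complex.I * ((A' j (h • Z') : ℝ) : ℂ))
          (((differentiable_const _).mul hcdiff) Z) (hud Z),
        fderiv_const_mul (hcdiff Z) Complex.I]
    rw [ContinuousLinearMap.sub_apply, hmul]
    simp only [ContinuousLinearMap.add_apply, ContinuousLinearMap.smul_apply, hc_fderiv,
      smul_eq_mul]
    push_cast
    set aa := ((A' j (h • Z) : ℝ) : ℂ)
    set qq := ((fderiv ℝ (fun Z' => A' j (h • Z')) Z (Pi.single j 1) : ℝ) : ℂ)
    set du := fderiv ℝ u Z (Pi.single j 1)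
    set S := fderiv ℝ (fun Z' => fderiv ℝ u Z' (Pi.single j 1)) Z (Pi.single j 1)
    linear_combination (-aa * aa * u Z) * Complex.I_mul_I
  -- expansion of F
  have hFexp : F = fun h : ℝ =>
      (-(∑ j, fderiv ℝ (fun Z' => fderiv ℝ u Z' (Pi.single j 1)) Z (Pi.single j 1)))
      + (∑ j, (Complex.I * u Z)
          * ((fderiv ℝ (fun Z' => A' j (h • Z')) Z (Pi.single j 1) : ℝ) : ℂ))
      + (∑ j, (2 * Complex.I * fderiv ℝ u Z (Pi.single j 1)) * ((A' j (h • Z) : ℝ) : ℂ))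
      + (∑ j, u Z * ((A' j (h • Z) * A' j (h • Z) : ℝ) : ℂ))
      + u Z * ((V (x₀ + h • Z) : ℝ) : ℂ) := by
    funext h
    rw [hF h]
    have : -(∑ j, P h j (P h j u) Z) = ∑ j, -(P h j (P h j u) Z) := by
      rw [Finset.sum_neg_distrib]
    rw [this, Finset.sum_congr rfl fun j _ => hPP h j]
    rw [Finset.sum_add_distrib, Finset.sum_add_distrib, Finset.sum_add_distrib,
      Finset.sum_neg_distrib]
    ring
    -- smoothness of the pieces of F
  have hs1 : ContDiff ℝ ∞ (fun h : ℝ => ∑ j, (Complex.I * u Z)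
      * ((fderiv ℝ (fun Z' => A' j (h • Z')) Z (Pi.single j 1) : ℝ) : ℂ)) :=
    ContDiff.sum fun j _ => contDiff_const.mul (Complex.ofRealCLM.contDiff.comp (hq_smooth j))
  have hs2 : ContDiff ℝ ∞ (fun h : ℝ => ∑ j, (2 * Complex.I * fderiv ℝ u Z (Pi.single j 1))
      * ((A' j (h • Z) : ℝ) : ℂ)) :=
    ContDiff.sum fun j _ => contDiff_const.mul (Complex.ofRealCLM.contDiff.comp (ha_smooth j))
  have hs3 : ContDiff ℝ ∞ (fun h : ℝ => ∑ j, u Z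
      * ((A' j (h • Z) * A' j (h • Z) : ℝ) : ℂ)) :=
    ContDiff.sum fun j _ => contDiff_const.mul
      (Complex.ofRealCLM.contDiff.comp ((ha_smooth j).mul (ha_smooth j)))
  have hvs : ContDiff ℝ ∞ (fun h : ℝ => V (x₀ + h • Z)) :=
    hV'.comp (contDiff_const.add (contDiff_id.smul contDiff_const))
  have hs4 : ContDiff ℝ ∞ (fun h : ℝ => u Z * ((V (x₀ + h • Z) : ℝ) : ℂ)) :=
    contDiff_const.mul (Complex.ofRealCLM.contDiff.comp hvs)
  have hof1 : ∀ j : Fin d, ContDiff ℝ ∞ (fun h : ℝ =>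
      ((fderiv ℝ (fun Z' => A' j (h • Z')) Z (Pi.single j 1) : ℝ) : ℂ)) :=
    fun j => Complex.ofRealCLM.contDiff.comp (hq_smooth j)
  have hof2 : ∀ j : Fin d, ContDiff ℝ ∞ (fun h : ℝ => ((A' j (h • Z) : ℝ) : ℂ)) :=
    fun j => Complex.ofRealCLM.contDiff.comp (ha_smooth j)
  have hof3 : ∀ j : Fin d, ContDiff ℝ ∞ (fun h : ℝ =>
      ((A' j (h • Z) * A' j (h • Z) : ℝ) : ℂ)) :=
    fun j => Complex.ofRealCLM.contDiff.comp ((ha_smooth j).mul (ha_smooth j))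
  have hvs0 : ContDiff ℝ ∞ (fun h : ℝ => V (x₀ + h • Z)) :=
    hV'.comp (contDiff_const.add (contDiff_id.smul contDiff_const))
  have hof4 : ContDiff ℝ ∞ (fun h : ℝ => ((V (x₀ + h • Z) : ℝ) : ℂ)) :=
    Complex.ofRealCLM.contDiff.comp hvs0
  have hf1 : ∀ j : Fin d, ContDiff ℝ ∞ (fun h : ℝ => (Complex.I * u Z)
      * ((fderiv ℝ (fun Z' => A' j (h • Z')) Z (Pi.single j 1) : ℝ) : ℂ)) :=
    fun j => contDiff_const.mul (hof1 j)
  have hf2 : ∀ j : Fin d, ContDiff ℝ ∞ (fun h : ℝ =>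
      (2 * Complex.I * fderiv ℝ u Z (Pi.single j 1)) * ((A' j (h • Z) : ℝ) : ℂ)) :=
    fun j => contDiff_const.mul (hof2 j)
  have hf3 : ∀ j : Fin d, ContDiff ℝ ∞ (fun h : ℝ =>
      u Z * ((A' j (h • Z) * A' j (h • Z) : ℝ) : ℂ)) :=
    fun j => contDiff_const.mul (hof3 j)
  -- computing the iterated derivative of F
  have hiter : iteratedDeriv r F 0
      = (∑ j, (Complex.I * u Z) * ((iteratedDeriv r
            (fun h : ℝ => fderiv ℝ (fun Z' => A' j (h • Z')) Z (Pi.single j 1)) 0 : ℝ) : ℂ))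
        + (∑ j, (2 * Complex.I * fderiv ℝ u Z (Pi.single j 1))
            * ((iteratedDeriv r (fun h : ℝ => A' j (h • Z)) 0 : ℝ) : ℂ))
        + (∑ j, u Z * ((iteratedDeriv r (fun h : ℝ => A' j (h • Z) * A' j (h • Z)) 0 : ℝ) : ℂ))
        + u Z * ((iteratedDeriv r (fun h : ℝ => V (x₀ + h • Z)) 0 : ℝ) : ℂ) := by
    rw [hFexp]
    rw [itd_add (((contDiff_const.add hs1).add hs2).add hs3) hs4 r 0,
      itd_add ((contDiff_const.add hs1).add hs2) hs3 r 0,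
      itd_add (contDiff_const.add hs1) hs2 r 0,
      itd_add contDiff_const hs1 r 0,
      itd_const r hr _ 0, zero_add]
    congr 1
    · congr 1
      · congr 1
        · rw [itd_sum Finset.univ _ hf1 r 0]
          refine Finset.sum_congr rfl fun j _ => ?_
          rw [itd_cmul (hof1 j) _ r 0, itd_ofReal (hq_smooth j) r 0]
        · rw [itd_sum Finset.univ _ hf2 r 0]
          refine Finset.sum_congr rfl fun j _ => ?_
          rw [itd_cmul (hof2 j) _ r 0, itd_ofReal (ha_smooth j) r 0]
      · rw [itd_sum Finset.univ _ hf3 r 0]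
        refine Finset.sum_congr rfl fun j _ => ?_
        rw [itd_cmul (hof3 j) _ r 0, itd_ofReal ((ha_smooth j).mul (ha_smooth j)) r 0]
    · rw [itd_cmul hof4 _ r 0, itd_ofReal hvs r 0]
  -- real identities
  have hA₁Z : ∀ j l, A₁ j l Z
      = (1 / (Nat.factorial l) : ℝ) * iteratedDeriv l (fun h : ℝ => A' j (h • Z)) 0 :=
    fun j l => hA₁ j l Z
  have hA₁0 : ∀ j, A₁ j 0 Z = 0 := by
    intro j
    rw [hA₁Z j 0]
    simp [hA'0 j]
  have hMj : ∀ j, (1 / (Nat.factorial r) : ℝ)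
        * iteratedDeriv r (fun h : ℝ => A' j (h • Z) * A' j (h • Z)) 0
      = ∑ l ∈ Finset.Ico 1 r, A₁ j l Z * A₁ j (r - l) Z := by
    intro j
    rw [itd_mul (ha_smooth j) (ha_smooth j) r 0, Finset.mul_sum]
    have hterm : ∀ i ∈ Finset.range (r + 1),
        (1 / (Nat.factorial r) : ℝ) * ((r.choose i : ℝ)
          * (iteratedDeriv i (fun h : ℝ => A' j (h • Z)) 0
            * iteratedDeriv (r - i) (fun h : ℝ => A' j (h • Z)) 0))
        = A₁ j i Z * A₁ j (r - i) Z := by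
      intro i hi
      have hi' : i ≤ r := Nat.lt_succ_iff.mp (Finset.mem_range.mp hi)
      have hfact : (r.choose i : ℝ) * (Nat.factorial i : ℝ) * (Nat.factorial (r - i) : ℝ)
          = (Nat.factorial r : ℝ) := by
        exact_mod_cast congrArg (fun m : ℕ => (m : ℝ))
          (Nat.choose_mul_factorial_mul_factorial hi')
      rw [hA₁Z j i, hA₁Z j (r - i)]
      have h1 : (Nat.factorial i : ℝ) ≠ 0 := Nat.cast_ne_zero.mpr (Nat.factorial_ne_zero i)
      have h2 : (Nat.factorial (r - i) : ℝ) ≠ 0 := Nat.cast_ne_zero.mpr (Nat.factorial_ne_zero _)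
      have h3 : (Nat.factorial r : ℝ) ≠ 0 := Nat.cast_ne_zero.mpr (Nat.factorial_ne_zero r)
      field_simp
      linear_combination (iteratedDeriv i (fun h : ℝ => A' j (h • Z)) 0
        * iteratedDeriv (r - i) (fun h : ℝ => A' j (h • Z)) 0) * hfact
    rw [Finset.sum_congr rfl hterm, Finset.sum_range_succ, Nat.sub_self, hA₁0 j, mul_zero,
      add_zero, Finset.range_eq_Ico, Finset.sum_eq_sum_Ico_succ_bot hr, Nat.sub_zero,
      hA₁0 j, zero_mul, zero_add]
  -- final assembly
  rw [hiter, mul_add, mul_add, mul_add, Finset.mul_sum, Finset.mul_sum, Finset.mul_sum]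
  have f1 : ∀ j ∈ Finset.univ, (1 / (Nat.factorial r) : ℂ)
        * ((Complex.I * u Z) * ((iteratedDeriv r
            (fun h : ℝ => fderiv ℝ (fun Z' => A' j (h • Z')) Z (Pi.single j 1)) 0 : ℝ) : ℂ))
      = (Complex.I * u Z) * ((fderiv ℝ (A₁ j r) Z (Pi.single j 1) : ℝ) : ℂ) := by
    intro j _
    rw [hq_id j]
    push_cast
    ring
  have f2 : ∀ j ∈ Finset.univ, (1 / (Nat.factorial r) : ℂ)
        * ((2 * Complex.I * fderiv ℝ u Z (Pi.single j 1))
            * ((iteratedDeriv r (fun h : ℝ => A' j (h • Z)) 0 : ℝ) : ℂ))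
      = 2 * Complex.I * (((A₁ j r Z : ℝ) : ℂ) * fderiv ℝ u Z (Pi.single j 1)) := by
    intro j _
    rw [hA₁Z j r]
    push_cast
    ring
  have f3 : ∀ j ∈ Finset.univ, (1 / (Nat.factorial r) : ℂ)
        * (u Z * ((iteratedDeriv r (fun h : ℝ => A' j (h • Z) * A' j (h • Z)) 0 : ℝ) : ℂ))
      = u Z * ((∑ l ∈ Finset.Ico 1 r, A₁ j l Z * A₁ j (r - l) Z : ℝ) : ℂ) := by
    intro j _
    rw [← hMj j]
    push_cast
    ring
  have f4 : (1 / (Nat.factorial r) : ℂ)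
        * (u Z * ((iteratedDeriv r (fun h : ℝ => V (x₀ + h • Z)) 0 : ℝ) : ℂ))
      = u Z * ((T r Z : ℝ) : ℂ) := by
    rw [hT r Z]
    push_cast
    ring
  rw [Finset.sum_congr rfl f1, Finset.sum_congr rfl f2, Finset.sum_congr rfl f3, f4]
  conv_lhs => rw [← Finset.mul_sum, ← Finset.mul_sum, ← Finset.mul_sum]
  push_cast
  ring
end
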